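/- arXiv:2309.05971 — 5 statements merged into one kernel-verified Lean document; each statement's English description precedes it below -/
import Mathlib

section
/- Let Ω_t = {x : w(x,t) > 0} be a family of open sets in ℝ^d, increasing in t, such that w is continuous, w(x,·) is nondecreasing and Lipschitz in t, and for each t, Δw(·,t) ≥ 1/2 on Ω_t near its boundary in the distributional sense (quadratic nondegeneracy holds: sup_{B_r(x)} w(·,t) ≥ C r² whenever x ∈ closure(Ω_t)). Then the closures are continuous from above: closure(Ω_t) = ⋂_{ε>0} closure(Ω_{t+ε}). -/
open MeasureTheory Metric Set Filter
open scoped Topology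

/-- continuity from above of the closures of the positivity sets. -/
theorem closure_continuity_from_above {d : ℕ}
    (w : EuclideanSpace ℝ (Fin d) → ℝ → ℝ)
    (hw_cont : Continuous fun z : EuclideanSpace ℝ (Fin d) × ℝ => w z.1 z.2)
    (hw_mono : ∀ x, Monotone (w x))
    (L : NNReal) (hw_lip : ∀ x, LipschitzWith L (w x))
    (C : ℝ) (hC : 0 < C)
    (hnondeg : ∀ (t : ℝ) (x : EuclideanSpace ℝ (Fin d)) (r : ℝ), 0 < r → r < 1 →
      x ∈ closure {y | 0 < w y t} →
      C * r ^ 2 ≤ ⨆ y ∈ Metric.ball x r, w y t) :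
    ∀ t : ℝ, closure {y | 0 < w y t} =
      ⋂ ε ∈ Set.Ioi (0:ℝ), closure {y | 0 < w y (t + ε)} := by
  intro t
  apply Set.Subset.antisymm
  · intro x hx
    simp only [Set.mem_iInter]
    intro ε hε
    refine closure_mono (fun y hy => ?_) hx
    exact lt_of_lt_of_le hy (hw_mono y (by simp at hε; linarith : t ≤ t + ε))
  · intro x hx
    rw [_root_.mem_closure_iff]
    intro o ho hxo
    obtain ⟨δ, hδ, hball⟩ := Metric.isOpen_iff.mp ho x hxo
    set r : ℝ := min (δ / 2) (1 / 2) with hrdef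
    have hr0 : 0 < r := lt_min (by linarith) (by norm_num)
    have hr1 : r < 1 := lt_of_le_of_lt (min_le_right _ _) (by norm_num)
    have hrδ : r < δ := lt_of_le_of_lt (min_le_left _ _) (by linarith)
    set ε : ℝ := C * r ^ 2 / (2 * ((L : ℝ) + 1)) with hεdef
    have hL0 : (0:ℝ) ≤ (L : ℝ) := L.2
    have hε0 : 0 < ε := by positivity
    have hx' : x ∈ closure {y | 0 < w y (t + ε)} := by
      simp only [Set.mem_iInter] at hx
      exact hx ε hε0
    have hsup := hnondeg (t + ε) x r hr0 hr1 hx'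
    by_contra hcon
    rw [Set.not_nonempty_iff_eq_empty, Set.eq_empty_iff_forall_notMem] at hcon
    have hle : ∀ y ∈ Metric.ball x r, w y t ≤ 0 := by
      intro y hy
      by_contra hpos
      push_neg at hpos
      exact hcon y ⟨hball (Metric.ball_subset_ball hrδ.le hy), hpos⟩
    have key : (⨆ y ∈ Metric.ball x r, w y (t + ε)) ≤ (L : ℝ) * ε := by
      refine Real.iSup_le (fun y => Real.iSup_le (fun hy => ?_) (by positivity))
        (by positivity)
      have hlip := (hw_lip y).dist_le_mul (t + ε) t
      rw [Real.dist_eq, Real.dist_eq] at hlip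
      have : |w y (t + ε) - w y t| ≤ (L : ℝ) * ε := by
        have : |t + ε - t| = ε := by rw [show t + ε - t = ε by ring]; exact abs_of_pos hε0
        rw [this] at hlip; exact hlip
      have h2 := abs_le.mp this
      have := hle y hy
      linarith [h2.2]
    have : C * r ^ 2 ≤ (L : ℝ) * ε := le_trans hsup key
    rw [hεdef] at this
    have hCr : 0 < C * r ^ 2 := by positivity
    have hden : (0:ℝ) < 2 * ((L : ℝ) + 1) := by positivity
    have this2 : C * r ^ 2 * (2 * ((L:ℝ) + 1)) ≤ (L:ℝ) * (C * r ^ 2) := by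
      calc C * r ^ 2 * (2 * ((L:ℝ) + 1))
          ≤ (L : ℝ) * (C * r ^ 2 / (2 * ((L:ℝ) + 1))) * (2 * ((L:ℝ) + 1)) := by
            exact mul_le_mul_of_nonneg_right this hden.le
        _ = (L:ℝ) * (C * r ^ 2) := by field_simp
    nlinarith [this2, hCr, hL0]
end

section
/- Let p_γ be a smooth nonnegative solution of the porous medium pressure equation ∂_t p_γ - |∇p_γ|² - γ p_γ (Δp_γ + n_γ) = 0 with smooth nutrient n_γ solving ∂_t n_γ - Δn_γ = -ρ_γ n_γ, ρ_γ = p_γ^{1/γ}. Set u_γ = -γ(Δp_γ + n_γ). Then u_γ satisfies the differential inequality n_γ u_γ + (1/γ)(∂_t u_γ + u_γ²) ≤ 2∇n_γ·∇p_γ - ∂_t n_γ + 2(1 + 1/γ)∇p_γ·∇u_γ + p_γ Δu_γ pointwise. -/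
open MeasureTheory Metric Set Filter
open scoped RealInnerProductSpace Topology

/-- Laplacian as the sum of second partial derivatives. -/
noncomputable def lap {d : ℕ} (u : EuclideanSpace ℝ (Fin d) → ℝ)
    (x : EuclideanSpace ℝ (Fin d)) : ℝ :=
  ∑ i, fderiv ℝ (fun y => fderiv ℝ u y (EuclideanSpace.single i 1)) x
    (EuclideanSpace.single i 1)

noncomputable def pdv {Z : Type*} [NormedAddCommGroup Z] [NormedSpace ℝ Z]
    (v : Z) (f : Z → ℝ) (z : Z) : ℝ := fderiv ℝ f z v

section pdlemmas
variable {Z : Type*} [NormedAddCommGroup Z] [NormedSpace ℝ Z]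

lemma pdv_smooth (v : Z) {f : Z → ℝ} (hf : ContDiff ℝ (⊤ : ℕ∞) f) : ContDiff ℝ (⊤ : ℕ∞) (pdv v f) :=
  (hf.fderiv_right (by simp)).clm_apply contDiff_const

lemma diffAt_of_smooth {f : Z → ℝ} (hf : ContDiff ℝ (⊤ : ℕ∞) f) (z : Z) : DifferentiableAt ℝ f z :=
  (hf.differentiable (by simp)).differentiableAt

lemma pdv_symm {f : Z → ℝ} (hf : ContDiff ℝ (⊤ : ℕ∞) f) (v w : Z) (z : Z) :
    pdv v (pdv w f) z = pdv w (pdv v f) z := by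
  have hd : DifferentiableAt ℝ (fderiv ℝ f) z :=
    (((hf.fderiv_right (m := (⊤ : ℕ∞)) (by simp))).differentiable (by simp)).differentiableAt
  have h1 : ∀ a b : Z, pdv a (pdv b f) z = fderiv ℝ (fderiv ℝ f) z a b := by
    intro a b
    unfold pdv
    rw [fderiv_clm_apply hd (differentiableAt_const b)]
    simp
  rw [h1, h1]
  exact (hf.contDiffAt.isSymmSndFDerivAt (by simp [minSmoothness_of_isRCLikeNormedField]; exact WithTop.coe_le_coe.mpr le_top)).eq v w

lemma pdv_add (v : Z) {f g : Z → ℝ} (hf : ContDiff ℝ (⊤ : ℕ∞) f) (hg : ContDiff ℝ (⊤ : ℕ∞) g) (z : Z) :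
    pdv v (fun y => f y + g y) z = pdv v f z + pdv v g z := by
  unfold pdv
  rw [fderiv_fun_add (diffAt_of_smooth hf z) (diffAt_of_smooth hg z)]; rfl

lemma pdv_sub (v : Z) {f g : Z → ℝ} (hf : ContDiff ℝ (⊤ : ℕ∞) f) (hg : ContDiff ℝ (⊤ : ℕ∞) g) (z : Z) :
    pdv v (fun y => f y - g y) z = pdv v f z - pdv v g z := by
  unfold pdv
  rw [fderiv_fun_sub (diffAt_of_smooth hf z) (diffAt_of_smooth hg z)]; rfl

lemma pdv_mul (v : Z) {f g : Z → ℝ} (hf : ContDiff ℝ (⊤ : ℕ∞) f) (hg : ContDiff ℝ (⊤ : ℕ∞) g) (z : Z) :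
    pdv v (fun y => f y * g y) z = pdv v f z * g z + f z * pdv v g z := by
  unfold pdv
  rw [fderiv_fun_mul (diffAt_of_smooth hf z) (diffAt_of_smooth hg z)]
  simp only [ContinuousLinearMap.add_apply, ContinuousLinearMap.smul_apply, smul_eq_mul]
  ring

lemma pdv_const_mul (v : Z) (c : ℝ) {f : Z → ℝ} (hf : ContDiff ℝ (⊤ : ℕ∞) f) (z : Z) :
    pdv v (fun y => c * f y) z = c * pdv v f z := by
  unfold pdv
  rw [fderiv_const_mul (diffAt_of_smooth hf z)]; rfl

lemma pdv_sum (v : Z) {ι : Type*} (s : Finset ι) {F : ι → Z → ℝ}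
    (hF : ∀ i ∈ s, ContDiff ℝ (⊤ : ℕ∞) (F i)) (z : Z) :
    pdv v (fun y => ∑ i ∈ s, F i y) z = ∑ i ∈ s, pdv v (F i) z := by
  unfold pdv
  rw [fderiv_fun_sum (fun i hi => diffAt_of_smooth (hF i hi) z)]
  simp

lemma pdv_sq (v : Z) {f : Z → ℝ} (hf : ContDiff ℝ (⊤ : ℕ∞) f) (z : Z) :
    pdv v (fun y => f y ^ 2) z = 2 * f z * pdv v f z := by
  have h := pdv_mul v hf hf z
  have h2 : (fun y => f y ^ 2) = fun y => f y * f y := by ext y; ring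
  rw [h2, h]; ring

end pdlemmas

section bridge
variable {d : ℕ}
local notation "E" => EuclideanSpace ℝ (Fin d)

lemma deriv_slice {f : ℝ × E → ℝ} (hf : ContDiff ℝ (⊤ : ℕ∞) f) (t : ℝ) (x : E) :
    deriv (fun s => f (s, x)) t = pdv ((1 : ℝ), (0 : E)) f (t, x) := by
  have hg : HasDerivAt (fun s : ℝ => (s, x)) ((1 : ℝ), (0 : E)) t :=
    (hasDerivAt_id t).prodMk (hasDerivAt_const t x)
  exact ((diffAt_of_smooth hf (t, x)).hasFDerivAt.comp_hasDerivAt t hg).deriv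

lemma fderiv_slice {f : ℝ × E → ℝ} (hf : ContDiff ℝ (⊤ : ℕ∞) f) (t : ℝ) (x : E) (v : E) :
    fderiv ℝ (fun y => f (t, y)) x v = pdv ((0 : ℝ), v) f (t, x) := by
  have hg : HasFDerivAt (fun y : E => (t, y))
      ((0 : E →L[ℝ] ℝ).prod (ContinuousLinearMap.id ℝ E)) x :=
    (hasFDerivAt_const t x).prodMk (hasFDerivAt_id x)
  have h := ((diffAt_of_smooth hf (t, x)).hasFDerivAt.comp x hg).fderiv
  have h2 : fderiv ℝ (fun y => f (t, y)) x = fderiv ℝ (f ∘ Prod.mk t) x := rfl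
  rw [h2, h]
  rfl

lemma lap_slice {f : ℝ × E → ℝ} (hf : ContDiff ℝ (⊤ : ℕ∞) f) (t : ℝ) (x : E) :
    lap (fun y => f (t, y)) x
      = ∑ i, pdv ((0 : ℝ), EuclideanSpace.single i 1)
          (pdv ((0 : ℝ), EuclideanSpace.single i 1) f) (t, x) := by
  unfold lap
  refine Finset.sum_congr rfl fun i _ => ?_
  have h1 : (fun y => fderiv ℝ (fun y' => f (t, y')) y (EuclideanSpace.single i 1))
      = fun y => pdv ((0 : ℝ), EuclideanSpace.single i 1) f (t, y) :=
    funext fun y => fderiv_slice hf t y _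
  rw [h1]
  exact fderiv_slice ((hf.fderiv_right (by simp)).clm_apply contDiff_const) t x _

lemma grad_apply (g : E → ℝ) (x v : E) : ⟪gradient g x, v⟫ = fderiv ℝ g x v :=
  InnerProductSpace.toDual_symm_apply

lemma grad_coord (g : E → ℝ) (x : E) (i : Fin d) :
    gradient g x i = fderiv ℝ g x (EuclideanSpace.single i 1) := by
  rw [← grad_apply]
  rw [real_inner_comm]
  simpa using (EuclideanSpace.inner_single_left (𝕜 := ℝ) i 1 (gradient g x)).symm

lemma inner_grad (g h : E → ℝ) (x : E) :
    (inner ℝ (gradient g x) (gradient h x) : ℝ)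
      = ∑ i, fderiv ℝ g x (EuclideanSpace.single i 1)
          * fderiv ℝ h x (EuclideanSpace.single i 1) := by
  rw [PiLp.inner_apply]
  refine Finset.sum_congr rfl fun i _ => ?_
  simp [grad_coord, RCLike.inner_apply, mul_comm]

lemma norm_grad_sq (g : E → ℝ) (x : E) :
    ‖gradient g x‖ ^ 2 = ∑ i, fderiv ℝ g x (EuclideanSpace.single i 1) ^ 2 := by
  rw [← real_inner_self_eq_norm_sq, inner_grad]
  exact Finset.sum_congr rfl fun i _ => (sq _).symm

end bridge

section key
variable {d : ℕ}
local notation "E" => EuclideanSpace ℝ (Fin d)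

noncomputable def pmeT : ℝ × EuclideanSpace ℝ (Fin d) := ((1 : ℝ), 0)
noncomputable def pmeX (i : Fin d) : ℝ × EuclideanSpace ℝ (Fin d) :=
  ((0 : ℝ), EuclideanSpace.single i 1)

lemma pme_key (γ : ℝ) (hγ : γ ≠ 0) (P N V : ℝ × E → ℝ)
    (hP : ContDiff ℝ (⊤ : ℕ∞) P) (hN : ContDiff ℝ (⊤ : ℕ∞) N)
    (hV : V = fun z => -γ * ((∑ i, pdv (pmeX i) (pdv (pmeX i) P) z) + N z))
    (hPtf : pdv pmeT P = fun z => (∑ i, (pdv (pmeX i) P z) ^ 2) - P z * V z)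
    (z : ℝ × E) :
    N z * V z + (1/γ) * (pdv pmeT V z + V z ^ 2)
      = 2 * (∑ i, pdv (pmeX i) N z * pdv (pmeX i) P z) - pdv pmeT N z
        + 2 * (1 + 1/γ) * (∑ i, pdv (pmeX i) P z * pdv (pmeX i) V z)
        + P z * (∑ i, pdv (pmeX i) (pdv (pmeX i) V) z)
        - 2 * (∑ i, ∑ j, (pdv (pmeX i) (pdv (pmeX j) P) z) ^ 2) := by
  have hV_smooth : ContDiff ℝ (⊤ : ℕ∞) V := by
    rw [hV]
    exact contDiff_const.mul
      ((ContDiff.sum fun i _ => pdv_smooth _ (pdv_smooth _ hP)).add hN)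
  -- the sum of second derivatives as a function
  have hS : (fun y => ∑ i, pdv (pmeX i) (pdv (pmeX i) P) y)
      = fun y => -(V y)/γ - N y := by
    funext y
    rw [hV]
    field_simp
    ring
  have hSsmooth : ContDiff ℝ (⊤ : ℕ∞) (fun y : ℝ × E => ∑ i, pdv (pmeX i) (pdv (pmeX i) P) y) :=
    ContDiff.sum fun i _ => pdv_smooth _ (pdv_smooth _ hP)
  -- step: sum over i of third derivatives
  have hC : ∀ (j : Fin d) (z : ℝ × E),
      (∑ i, pdv (pmeX i) (pdv (pmeX i) (pdv (pmeX j) P)) z)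
        = -(pdv (pmeX j) V z)/γ - pdv (pmeX j) N z := by
    intro j z
    have h1 : ∀ i : Fin d, pdv (pmeX i) (pdv (pmeX i) (pdv (pmeX j) P)) z
        = pdv (pmeX j) (pdv (pmeX i) (pdv (pmeX i) P)) z := by
      intro i
      have hinner : pdv (pmeX i) (pdv (pmeX j) P) = pdv (pmeX j) (pdv (pmeX i) P) :=
        funext fun y => pdv_symm hP _ _ y
      rw [hinner]
      exact pdv_symm (pdv_smooth _ hP) _ _ z
    rw [Finset.sum_congr rfl fun i _ => h1 i]
    rw [← pdv_sum (pmeX j) Finset.univ (fun i _ => pdv_smooth _ (pdv_smooth _ hP)) z]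
    rw [hS]
    have hrw : (fun y : ℝ × E => -(V y)/γ - N y)
        = fun y => (-(1/γ)) * V y - N y := by funext y; ring
    rw [hrw, pdv_sub _ (contDiff_const.mul hV_smooth) hN,
      pdv_const_mul _ _ hV_smooth]
    ring
  -- first spatial derivative of the time derivative of P
  have hQ1 : ∀ i : Fin d, pdv (pmeX i) (pdv pmeT P)
      = fun y => (∑ j, 2 * (pdv (pmeX j) P y * pdv (pmeX i) (pdv (pmeX j) P) y))
          - (pdv (pmeX i) P y * V y + P y * pdv (pmeX i) V y) := by
    intro i
    funext y
    rw [hPtf]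
    rw [pdv_sub _ (ContDiff.sum fun j _ => (pdv_smooth _ hP).pow 2) (hP.mul hV_smooth),
      pdv_sum _ Finset.univ (fun j _ => (pdv_smooth _ hP).pow 2),
      pdv_mul _ hP hV_smooth]
    congr 1
    refine Finset.sum_congr rfl fun j _ => ?_
    rw [pdv_sq _ (pdv_smooth _ hP)]
    ring
  -- second spatial derivative of the time derivative of P
  have hQ2 : ∀ (i : Fin d) (z : ℝ × E), pdv (pmeX i) (pdv (pmeX i) (pdv pmeT P)) z
      = (∑ j, (2 * (pdv (pmeX i) (pdv (pmeX j) P) z) ^ 2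
            + 2 * (pdv (pmeX j) P z * pdv (pmeX i) (pdv (pmeX i) (pdv (pmeX j) P)) z)))
        - (pdv (pmeX i) (pdv (pmeX i) P) z * V z + 2 * (pdv (pmeX i) P z * pdv (pmeX i) V z)
            + P z * pdv (pmeX i) (pdv (pmeX i) V) z) := by
    intro i z
    rw [hQ1 i]
    rw [pdv_sub _ (ContDiff.sum fun j _ =>
        contDiff_const.mul ((pdv_smooth _ hP).mul (pdv_smooth _ (pdv_smooth _ hP))))
      ((pdv_smooth _ hP).mul hV_smooth |>.add (hP.mul (pdv_smooth _ hV_smooth)))]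
    rw [pdv_sum _ Finset.univ (fun j _ =>
        contDiff_const.mul ((pdv_smooth _ hP).mul (pdv_smooth _ (pdv_smooth _ hP))))]
    rw [pdv_add _ ((pdv_smooth _ hP).mul hV_smooth) (hP.mul (pdv_smooth _ hV_smooth))]
    rw [pdv_mul _ (pdv_smooth _ hP) hV_smooth, pdv_mul _ hP (pdv_smooth _ hV_smooth)]
    congr 1
    · refine Finset.sum_congr rfl fun j _ => ?_
      rw [pdv_const_mul _ _ ((pdv_smooth _ hP).mul (pdv_smooth _ (pdv_smooth _ hP))),
        pdv_mul _ (pdv_smooth _ hP) (pdv_smooth _ (pdv_smooth _ hP))]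
      ring
    · ring
  -- time derivative of V
  have hVt : pdv pmeT V z
      = -γ * ((∑ i, pdv (pmeX i) (pdv (pmeX i) (pdv pmeT P)) z) + pdv pmeT N z) := by
    have hswap : ∀ i : Fin d, pdv pmeT (pdv (pmeX i) (pdv (pmeX i) P)) z
        = pdv (pmeX i) (pdv (pmeX i) (pdv pmeT P)) z := by
      intro i
      have hinner : pdv pmeT (pdv (pmeX i) P) = pdv (pmeX i) (pdv pmeT P) :=
        funext fun y => pdv_symm hP _ _ y
      rw [pdv_symm (pdv_smooth _ hP) pmeT (pmeX i) z, hinner]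
    rw [hV, pdv_const_mul _ _ (hSsmooth.add hN), pdv_add _ hSsmooth hN,
      pdv_sum _ Finset.univ (fun i _ => pdv_smooth _ (pdv_smooth _ hP))]
    rw [Finset.sum_congr rfl fun i _ => hswap i]
  -- assemble
  have e2' : (∑ i : Fin d, ∑ j,
        pdv (pmeX j) P z * pdv (pmeX i) (pdv (pmeX i) (pdv (pmeX j) P)) z)
      = ∑ j, pdv (pmeX j) P z * (-(pdv (pmeX j) V z)/γ - pdv (pmeX j) N z) := by
    rw [Finset.sum_comm]
    refine Finset.sum_congr rfl fun j _ => ?_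
    rw [← hC j z, Finset.mul_sum]
  have hsum : (∑ i, pdv (pmeX i) (pdv (pmeX i) (pdv pmeT P)) z)
      = 2 * (∑ i, ∑ j, (pdv (pmeX i) (pdv (pmeX j) P) z) ^ 2)
        + 2 * (∑ j, pdv (pmeX j) P z * (-(pdv (pmeX j) V z)/γ - pdv (pmeX j) N z))
        - ((∑ i, pdv (pmeX i) (pdv (pmeX i) P) z) * V z
            + 2 * (∑ i, pdv (pmeX i) P z * pdv (pmeX i) V z)
            + P z * (∑ i, pdv (pmeX i) (pdv (pmeX i) V) z)) := by
    rw [Finset.sum_congr rfl fun i _ => hQ2 i z]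
    simp only [Finset.sum_add_distrib, Finset.sum_sub_distrib, ← Finset.mul_sum,
      ← Finset.sum_mul]
    rw [e2']
  have e4 : (∑ j, pdv (pmeX j) P z * (-(pdv (pmeX j) V z)/γ - pdv (pmeX j) N z))
      = -(1/γ) * (∑ j, pdv (pmeX j) P z * pdv (pmeX j) V z)
        - (∑ j, pdv (pmeX j) N z * pdv (pmeX j) P z) := by
    rw [Finset.mul_sum, ← Finset.sum_sub_distrib]
    refine Finset.sum_congr rfl fun j _ => ?_
    field_simp
  have hSz : (∑ i, pdv (pmeX i) (pdv (pmeX i) P) z) = -(V z)/γ - N z := by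
    have := congrFun hS z
    simpa using this
  rw [hVt, hsum, e4, hSz]
  field_simp
  ring
end key


/-- the differential inequality satisfied by `u_γ = -γ(Δp_γ + n_γ)` for
smooth solutions of the porous medium pressure equation coupled to the nutrient. -/
theorem pme_ab_inequality {d : ℕ} (γ : ℝ) (hγ : 1 < γ)
    (p n : ℝ → EuclideanSpace ℝ (Fin d) → ℝ)
    (hp_smooth : ContDiff ℝ (⊤ : ℕ∞) fun z : ℝ × EuclideanSpace ℝ (Fin d) => p z.1 z.2)
    (hn_smooth : ContDiff ℝ (⊤ : ℕ∞) fun z : ℝ × EuclideanSpace ℝ (Fin d) => n z.1 z.2)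
    (hp_nonneg : ∀ t x, 0 ≤ p t x) (hn_nonneg : ∀ t x, 0 ≤ n t x)
    (hpeq : ∀ t x, deriv (fun s => p s x) t - ‖gradient (p t) x‖ ^ 2
      - γ * p t x * (lap (p t) x + n t x) = 0)
    (hneq : ∀ t x, deriv (fun s => n s x) t - lap (n t) x = -(p t x ^ (1/γ)) * n t x)
    (u : ℝ → EuclideanSpace ℝ (Fin d) → ℝ)
    (hu : ∀ t x, u t x = -γ * (lap (p t) x + n t x)) :
    ∀ t x,
      n t x * u t x + (1/γ) * (deriv (fun s => u s x) t + u t x ^ 2) ≤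
        2 * (inner ℝ (gradient (n t) x) (gradient (p t) x) : ℝ) - deriv (fun s => n s x) t
          + 2 * (1 + 1/γ) * (inner ℝ (gradient (p t) x) (gradient (u t) x) : ℝ)
          + p t x * lap (u t) x := by
  have hγ0 : γ ≠ 0 := by linarith
  set P : ℝ × EuclideanSpace ℝ (Fin d) → ℝ := fun z => p z.1 z.2 with hPdef
  set N : ℝ × EuclideanSpace ℝ (Fin d) → ℝ := fun z => n z.1 z.2 with hNdef
  set V : ℝ × EuclideanSpace ℝ (Fin d) → ℝ :=
    fun z => -γ * ((∑ i, pdv (pmeX i) (pdv (pmeX i) P) z) + N z) with hVdef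
  have hP : ContDiff ℝ (⊤ : ℕ∞) P := hp_smooth
  have hN : ContDiff ℝ (⊤ : ℕ∞) N := hn_smooth
  have hV_smooth : ContDiff ℝ (⊤ : ℕ∞) V := by
    rw [hVdef]
    exact contDiff_const.mul
      ((ContDiff.sum fun i _ => pdv_smooth _ (pdv_smooth _ hP)).add hN)
  have hlapP : ∀ (s : ℝ) (y : EuclideanSpace ℝ (Fin d)),
      lap (p s) y = ∑ i, pdv (pmeX i) (pdv (pmeX i) P) (s, y) := fun s y =>
    lap_slice hP s y
  have huV : ∀ s y, u s y = V (s, y) := by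
    intro s y
    rw [hu s y, hlapP s y, hVdef]
  have hPtf : pdv pmeT P = fun z => (∑ i, (pdv (pmeX i) P z) ^ 2) - P z * V z := by
    funext z
    obtain ⟨s, y⟩ := z
    have h := hpeq s y
    have ha : deriv (fun s' => p s' y) s = pdv pmeT P (s, y) := deriv_slice hP s y
    have hb : ‖gradient (p s) y‖ ^ 2 = ∑ i, (pdv (pmeX i) P (s, y)) ^ 2 := by
      rw [norm_grad_sq]
      exact Finset.sum_congr rfl fun i _ => by rw [fderiv_slice hP s y]; rfl
    rw [ha, hb, hlapP s y] at h
    rw [hVdef]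
    simp only []
    linear_combination h
  intro t x
  have hkey := pme_key γ hγ0 P N V hP hN hVdef hPtf (t, x)
  have h1 : u t x = V (t, x) := huV t x
  have hut : u t = fun y => V (t, y) := funext fun y => huV t y
  have h2 : deriv (fun s => u s x) t = pdv pmeT V (t, x) := by
    have hus : (fun s => u s x) = fun s => V (s, x) := funext fun s => huV s x
    rw [hus]
    exact deriv_slice hV_smooth t x
  have h3 : (inner ℝ (gradient (p t) x) (gradient (u t) x) : ℝ)
      = ∑ i, pdv (pmeX i) P (t, x) * pdv (pmeX i) V (t, x) := by
    rw [hut, inner_grad]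
    exact Finset.sum_congr rfl fun i _ => by
      rw [fderiv_slice hP t x, fderiv_slice hV_smooth t x]; rfl
  have h4 : lap (u t) x = ∑ i, pdv (pmeX i) (pdv (pmeX i) V) (t, x) := by
    rw [hut]
    exact lap_slice hV_smooth t x
  have h5 : (inner ℝ (gradient (n t) x) (gradient (p t) x) : ℝ)
      = ∑ i, pdv (pmeX i) N (t, x) * pdv (pmeX i) P (t, x) := by
    rw [inner_grad]
    exact Finset.sum_congr rfl fun i _ => by
      rw [fderiv_slice hN t x, fderiv_slice hP t x]; rfl
  have h6 : deriv (fun s => n s x) t = pdv pmeT N (t, x) := deriv_slice hN t x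
  have h7 : n t x = N (t, x) := rfl
  have h8 : p t x = P (t, x) := rfl
  rw [h1, h2, h3, h4, h5, h6, h7, h8, hkey]
  have hsq : (0 : ℝ) ≤ ∑ i, ∑ j, (pdv (pmeX i) (pdv (pmeX j) P) (t, x)) ^ 2 :=
    Finset.sum_nonneg fun i _ => Finset.sum_nonneg fun j _ => sq_nonneg _
  linarith
end

section
/- Hopf lemma quantitative form: let r₀, c₀, C₀ > 0, α ∈ (0,1), and let u be a positive C² function on B_{r₀}(0) ∩ {x : x_d > C₀|x'|^{1+α}} with Δu ≤ -c₀ < 0 and u(0) = 0 (writing x = (x', x_d)). Then there exist ε, δ > 0 depending only on d, α, r₀, c₀, C₀ such that u(h e_d) ≥ ε h for all h ∈ (0, δ). -/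
/-!
In dimension `N`, compare `u` with `ε v` on `D ∩ B_ρ` for the barrier
`v(x) = x_N + c x_N^{1+α} - A |x|^{1+α}`. The choice `c α = A (α + N - 1)` makes `Δv ≥ 0` where
`x_N > 0`, so `Δ(u - ε v) < 0` and `u - ε v` has no interior minimum. On the graph part of the
boundary `v ≤ 0 < u`. On the spherical part, wherever `v > 0` the point lies at height
`x_N ≳ ρ^{1+α}` above the graph, and comparing `u` with a paraboloid on the ball of radius
`x_N / 2` gives `u ≳ x_N² ≥ ε v` there. Hence `u ≥ ε v` on `D ∩ B_ρ`, and `v(h e_N) ≥ h`.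
-/

open MeasureTheory Metric Set Filter

/-- The region above the graph `x_d = C₀ |x'|^{1+α}` inside the ball of radius `r₀`. -/
def hopfDomain (d : ℕ) (r₀ C₀ α : ℝ) : Set (EuclideanSpace ℝ (Fin (d + 1))) :=
  {x | x ∈ Metric.ball 0 r₀ ∧
    C₀ * (Real.sqrt (∑ i : Fin d, x (Fin.castSucc i) ^ 2)) ^ (1 + α) < x (Fin.last d)}

open InnerProductSpace Laplacian Topology Module
open scoped RealInnerProductSpace

theorem deriv_deriv_eq_of_hasDerivAt {f f' : ℝ → ℝ} {a b : ℝ}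
    (hf : ∀ᶠ t in 𝓝 a, HasDerivAt f (f' t) t) (hf' : HasDerivAt f' b a) :
    deriv (deriv f) a = b :=
  (EventuallyEq.deriv_eq (hf.mono fun _ ht => ht.deriv)).trans hf'.deriv

/- If `f''(a) < 0`, the second derivative test makes `a` a local maximum as well, so `f` is
locally constant and `f''(a) = 0`. -/
theorem deriv_deriv_nonneg_of_isLocalMin {f : ℝ → ℝ} {a : ℝ} (hmin : IsLocalMin f a)
    (hf : ContinuousAt f a) : 0 ≤ deriv (deriv f) a := by
  by_contra! hneg
  have hconst : f =ᶠ[𝓝 a] fun _ => f a :=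
    (hmin.and (isLocalMax_of_deriv_deriv_neg hneg hmin.deriv_eq_zero hf)).mono
      fun _ h => le_antisymm h.2 h.1
  have hderiv : deriv f =ᶠ[𝓝 a] fun _ => 0 :=
    hconst.eventually_nhds.mono fun _ (h : f =ᶠ[𝓝 _] _) => by rw [h.deriv_eq, deriv_const]
  simp [hderiv.deriv_eq] at hneg

theorem hasDerivAt_quadratic (a b c t : ℝ) :
    HasDerivAt (fun t : ℝ => a + b * t + c * t ^ 2) (b + 2 * c * t) t := by
  refine ((((hasDerivAt_id t).const_mul b).const_add a).add
    ((hasDerivAt_pow 2 t).const_mul c)).congr_deriv ?_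
  simp only [mul_one, Nat.cast_ofNat, Nat.add_one_sub_one, pow_one, add_right_inj]
  ring

theorem deriv_deriv_quadratic (a b c : ℝ) :
    deriv (deriv fun t : ℝ => a + b * t + c * t ^ 2) 0 = 2 * c := by
  refine deriv_deriv_eq_of_hasDerivAt (.of_forall (hasDerivAt_quadratic a b c)) ?_
  simpa using ((hasDerivAt_id (0 : ℝ)).const_mul (2 * c)).const_add b

theorem deriv_deriv_rpow_quadratic {a : ℝ} (ha : 0 < a) (b c q : ℝ) :
    deriv (deriv fun t : ℝ => (a + b * t + c * t ^ 2) ^ q) 0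
      = q * (q - 1) * a ^ (q - 2) * b ^ 2 + 2 * c * q * a ^ (q - 1) := by
  have hpos : ∀ᶠ t in 𝓝 (0 : ℝ), 0 < a + b * t + c * t ^ 2 :=
    (hasDerivAt_quadratic a b c 0).continuousAt.eventually (eventually_gt_nhds (by simpa using ha))
  refine deriv_deriv_eq_of_hasDerivAt
    (f' := fun t => (b + 2 * c * t) * (q * (a + b * t + c * t ^ 2) ^ (q - 1)))
    (hpos.mono fun t ht => ?_) ?_
  · exact ((hasDerivAt_quadratic a b c t).rpow_const (.inl ht.ne')).congr_deriv (by ring)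
  · have hlin : HasDerivAt (fun t => b + 2 * c * t) (2 * c) 0 := by
      simpa using ((hasDerivAt_id (0 : ℝ)).const_mul (2 * c)).const_add b
    have hpow := ((hasDerivAt_quadratic a b c 0).rpow_const (p := q - 1)
      (.inl (by simpa using ha.ne'))).const_mul q
    refine (hlin.mul hpow).congr_deriv ?_
    rw [show q - 1 - 1 = q - 2 by ring]
    simp only [mul_zero, add_zero, ne_eq, OfNat.ofNat_ne_zero, not_false_eq_true, zero_pow]
    ring

theorem ContDiffAt.iteratedFDeriv_two_apply_eq_deriv_deriv {E : Type*} [NormedAddCommGroup E]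
    [NormedSpace ℝ E] {f : E → ℝ} {x : E} (hf : ContDiffAt ℝ 2 f x) (v : E) :
    iteratedFDeriv ℝ 2 f x ![v, v] = deriv (deriv fun t : ℝ => f (x + t • v)) 0 := by
  have hline : ∀ t : ℝ, HasDerivAt (fun t : ℝ => x + t • v) v t := fun t => by
    simpa using ((hasDerivAt_id t).smul_const v).const_add x
  have hline_tendsto : Tendsto (fun t : ℝ => x + t • v) (𝓝 0) (𝓝 x) := by
    simpa using (hline 0).continuousAt.tendsto
  have hfd : ∀ᶠ y in 𝓝 x, DifferentiableAt ℝ f y :=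
    (hf.eventually (by simp)).mono fun _ hy => hy.differentiableAt (by norm_num)
  have hf' : HasFDerivAt (fderiv ℝ f) (fderiv ℝ (fderiv ℝ f) x) x :=
    ((hf.fderiv_right (m := 1) le_rfl).differentiableAt one_ne_zero).hasFDerivAt
  have hfirst : ∀ᶠ t in 𝓝 (0 : ℝ),
      HasDerivAt (fun t : ℝ => f (x + t • v)) (fderiv ℝ f (x + t • v) v) t :=
    (hline_tendsto.eventually hfd).mono fun t ht => ht.hasFDerivAt.comp_hasDerivAt t (hline t)
  have hsecond : HasDerivAt (fun t : ℝ => fderiv ℝ f (x + t • v) v)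
      (fderiv ℝ (fderiv ℝ f) x v v) 0 := by
    have hc : HasDerivAt (fun t : ℝ => fderiv ℝ f (x + t • v)) (fderiv ℝ (fderiv ℝ f) x v) 0 :=
      (by simpa using hf' : HasFDerivAt (fderiv ℝ f) _ (x + (0 : ℝ) • v)).comp_hasDerivAt 0
        (hline 0)
    simpa using hc.clm_apply (hasDerivAt_const 0 v)
  rw [iteratedFDeriv_two_apply]
  exact (deriv_deriv_eq_of_hasDerivAt hfirst hsecond).symm

theorem norm_add_smul_sq {E : Type*} [NormedAddCommGroup E] [InnerProductSpace ℝ E]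
    (x v : E) (t : ℝ) : ‖x + t • v‖ ^ 2 = ‖x‖ ^ 2 + 2 * ⟪x, v⟫ * t + ‖v‖ ^ 2 * t ^ 2 := by
  rw [norm_add_sq_real, inner_smul_right, norm_smul, mul_pow, Real.norm_eq_abs, sq_abs]
  ring

section Laplacian

variable {E : Type*} [NormedAddCommGroup E] [InnerProductSpace ℝ E] [FiniteDimensional ℝ E]

theorem laplacian_eq_sum_deriv_deriv {ι : Type*} [Fintype ι] (b : OrthonormalBasis ι ℝ E)
    {f : E → ℝ} {x : E} (hf : ContDiffAt ℝ 2 f x) :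
    Δ f x = ∑ i, deriv (deriv fun t : ℝ => f (x + t • b i)) 0 := by
  simp [laplacian_eq_iteratedFDeriv_orthonormalBasis f b,
    hf.iteratedFDeriv_two_apply_eq_deriv_deriv]

theorem IsLocalMin.laplacian_nonneg {f : E → ℝ} {x : E} (hmin : IsLocalMin f x)
    (hf : ContDiffAt ℝ 2 f x) : 0 ≤ Δ f x := by
  rw [laplacian_eq_sum_deriv_deriv (stdOrthonormalBasis ℝ E) hf]
  have hline : ∀ v : E, ContinuousAt (fun t : ℝ => x + t • v) 0 := fun v => by fun_prop
  refine Finset.sum_nonneg fun i _ => deriv_deriv_nonneg_of_isLocalMin ?_ ?_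
  · exact IsLocalMin.comp_continuous (by simpa using hmin) (hline _)
  · exact hf.continuousAt.comp_of_eq (hline _) (by simp)

theorem laplacian_norm_sub_sq (x₀ x : E) :
    Δ (fun y => ‖y - x₀‖ ^ 2) x = 2 * finrank ℝ E := by
  have hf : ContDiffAt ℝ 2 (fun y => ‖y - x₀‖ ^ 2) x :=
    ((contDiff_norm_sq ℝ).comp (contDiff_id.sub contDiff_const)).contDiffAt
  have hslice : ∀ v : E, ‖v‖ = 1 →
      deriv (deriv fun t : ℝ => ‖x + t • v - x₀‖ ^ 2) 0 = 2 := fun v hv => by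
    simp_rw [add_sub_right_comm x, norm_add_smul_sq, hv]
    simpa using deriv_deriv_quadratic (‖x - x₀‖ ^ 2) (2 * ⟪x - x₀, v⟫) 1
  rw [laplacian_eq_sum_deriv_deriv (stdOrthonormalBasis ℝ E) hf]
  simp [hslice _ ((stdOrthonormalBasis ℝ E).orthonormal.1 _), mul_comm]

theorem laplacian_norm_rpow {x : E} (hx : x ≠ 0) (p : ℝ) :
    Δ (fun y : E => ‖y‖ ^ p) x = p * (p + finrank ℝ E - 2) * ‖x‖ ^ (p - 2) := by
  have hf : ContDiffAt ℝ 2 (fun y : E => ‖y‖ ^ p) x :=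
    (contDiffAt_norm ℝ hx).rpow_const_of_ne (norm_ne_zero_iff.2 hx)
  set b := stdOrthonormalBasis ℝ E
  have hQ : 0 < ‖x‖ ^ 2 := by positivity
  have hslice : ∀ i, deriv (deriv fun t : ℝ => ‖x + t • b i‖ ^ p) 0 =
      p / 2 * (p / 2 - 1) * (‖x‖ ^ 2) ^ (p / 2 - 2) * (2 * ⟪x, b i⟫) ^ 2
        + 2 * (p / 2) * (‖x‖ ^ 2) ^ (p / 2 - 1) := fun i => by
    have hpow : ∀ t : ℝ,
        ‖x + t • b i‖ ^ p = (‖x‖ ^ 2 + 2 * ⟪x, b i⟫ * t + 1 * t ^ 2) ^ (p / 2) := fun t => by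
      have h := norm_add_smul_sq x (b i) t
      rw [b.orthonormal.1 i, one_pow] at h
      rw [← h, ← Real.rpow_natCast, ← Real.rpow_mul (norm_nonneg _)]
      ring_nf
    simp_rw [hpow, deriv_deriv_rpow_quadratic hQ]
    ring
  have hsum : ∑ i, (2 * ⟪x, b i⟫) ^ 2 = 4 * ‖x‖ ^ 2 := by
    simp_rw [mul_pow, ← Finset.mul_sum, b.sum_sq_inner_left]
    norm_num
  have hpow_succ : (‖x‖ ^ 2) ^ (p / 2 - 2) * ‖x‖ ^ 2 = (‖x‖ ^ 2) ^ (p / 2 - 1) := by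
    rw [← Real.rpow_add_one hQ.ne']
    ring_nf
  have hpow_half : (‖x‖ ^ 2) ^ (p / 2 - 1) = ‖x‖ ^ (p - 2) := by
    rw [← Real.rpow_natCast, ← Real.rpow_mul (norm_nonneg _)]
    ring_nf
  rw [laplacian_eq_sum_deriv_deriv b hf, Finset.sum_congr rfl fun i _ => hslice i,
    Finset.sum_add_distrib, ← Finset.mul_sum, hsum, Finset.sum_const, Finset.card_univ,
    Fintype.card_fin, nsmul_eq_mul, ← hpow_half]
  linear_combination (p / 2 * (p / 2 - 1) * 4) * hpow_succ

theorem laplacian_inner_rpow {e x : E} (he : ‖e‖ = 1) (hx : 0 < ⟪e, x⟫) (p : ℝ) :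
    Δ (fun y => ⟪e, y⟫ ^ p) x = p * (p - 1) * ⟪e, x⟫ ^ (p - 2) := by
  have hf : ContDiffAt ℝ 2 (fun y => ⟪e, y⟫ ^ p) x :=
    (contDiffAt_const.inner ℝ contDiffAt_id).rpow_const_of_ne hx.ne'
  set b := stdOrthonormalBasis ℝ E
  have hslice : ∀ i, deriv (deriv fun t : ℝ => ⟪e, x + t • b i⟫ ^ p) 0 =
      p * (p - 1) * ⟪e, x⟫ ^ (p - 2) * ⟪e, b i⟫ ^ 2 := fun i => by
    simpa [inner_add_right, inner_smul_right, mul_comm] using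
      deriv_deriv_rpow_quadratic hx ⟪e, b i⟫ 0 p
  rw [laplacian_eq_sum_deriv_deriv b hf, Finset.sum_congr rfl fun i _ => hslice i,
    ← Finset.mul_sum, b.sum_sq_inner_left, he, one_pow, mul_one]

/- `w` need not extend continuously to `∂U`, so its boundary values enter only through
`liminf_{y → p, y ∈ U} w y ≥ 0`. -/
theorem nonneg_of_laplacian_neg {U : Set E} (hU : IsOpen U) (hUb : Bornology.IsBounded U)
    {w : E → ℝ} (hw : ContDiffOn ℝ 2 w U) (hΔ : ∀ x ∈ U, Δ w x < 0)
    (hfr : ∀ p ∈ frontier U, ∀ m < 0, ∀ᶠ y in 𝓝[U] p, m < w y) {x : E} (hx : x ∈ U) :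
    0 ≤ w x := by
  by_contra! hneg
  set S := {y ∈ U | w y ≤ w x}
  have hSU : S ⊆ U := Set.sep_subset _ _
  have hcont : ∀ y ∈ U, ContinuousAt w y := fun y hy =>
    (hw.contDiffAt (hU.mem_nhds hy)).continuousAt
  have hclS : closure S ⊆ U := by
    intro p hp
    by_contra hpU
    have hpfr : p ∈ frontier U := ⟨closure_mono hSU hp, by rwa [hU.interior_eq]⟩
    have : (𝓝[S] p).NeBot := mem_closure_iff_nhdsWithin_neBot.1 hp
    obtain ⟨y, hlt, hyS⟩ :=
      (((hfr p hpfr _ hneg).filter_mono (nhdsWithin_mono _ hSU)).and self_mem_nhdsWithin).exists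
    exact hlt.not_ge hyS.2
  have hSclosed : IsClosed S := isClosed_of_closure_subset fun p hp =>
    ⟨hclS hp, (hcont p (hclS hp)).continuousWithinAt.closure_le hp continuousWithinAt_const
      fun y hy => hy.2⟩
  obtain ⟨y₀, hy₀S, hmin⟩ := (Metric.isCompact_of_isClosed_isBounded hSclosed
    (hUb.subset hSU)).exists_isMinOn ⟨x, hx, le_rfl⟩
      fun y hy => (hcont y hy.1).continuousWithinAt
  have hminU : IsMinOn w U y₀ := fun y hy =>
    if h : w y ≤ w x then hmin ⟨hy, h⟩ else hy₀S.2.trans (le_of_not_ge h)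
  have hy₀ : U ∈ 𝓝 y₀ := hU.mem_nhds hy₀S.1
  exact (hΔ y₀ hy₀S.1).not_ge ((hminU.isLocalMin hy₀).laplacian_nonneg (hw.contDiffAt hy₀))

theorem mul_sq_le_of_laplacian_lt {u : E → ℝ} {x₀ : E} {r β : ℝ} (hr : 0 < r)
    (hu : ContDiffOn ℝ 2 u (Metric.closedBall x₀ r)) (hu₀ : ∀ x ∈ Metric.sphere x₀ r, 0 ≤ u x)
    (hΔ : ∀ x ∈ Metric.ball x₀ r, Δ u x < -(2 * finrank ℝ E * β)) : β * r ^ 2 ≤ u x₀ := by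
  have hsq : ContDiff ℝ 2 fun y : E => ‖y - x₀‖ ^ 2 :=
    (contDiff_norm_sq ℝ).comp (contDiff_id.sub contDiff_const)
  set q : E → ℝ := (fun _ => r ^ 2) - fun y => ‖y - x₀‖ ^ 2
  have hq : ContDiff ℝ 2 q := contDiff_const.sub hsq
  have hΔq : ∀ x, Δ q x = -(2 * finrank ℝ E) := fun x => by
    rw [contDiffAt_const.laplacian_sub hsq.contDiffAt, laplacian_const, laplacian_norm_sub_sq]
    simp
  have hw : ContDiffOn ℝ 2 (u - β • q) (Metric.closedBall x₀ r) :=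
    hu.sub (hq.contDiffOn.const_smul β)
  have key := nonneg_of_laplacian_neg Metric.isOpen_ball Metric.isBounded_ball
    (hw.mono Metric.ball_subset_closedBall) (fun x hx => ?_) (fun p hp m hm => ?_)
    (Metric.mem_ball_self hr)
  · simpa [q] using key
  · have hux := hu.contDiffAt (Metric.closedBall_mem_nhds_of_mem hx)
    have hβq : ContDiffAt ℝ 2 (β • q) x := (hq.const_smul β).contDiffAt
    rw [hux.laplacian_sub hβq, laplacian_smul β hq.contDiffAt, hΔq, smul_eq_mul]
    linarith [hΔ x hx]
  · rw [frontier_ball x₀ hr.ne'] at hp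
    have hwp : m < (u - β • q) p := by
      simpa [q, mem_sphere_iff_norm.1 hp] using hm.trans_le (hu₀ p hp)
    exact ((hw.continuousOn p (Metric.sphere_subset_closedBall hp)).eventually
      (lt_mem_nhds hwp)).filter_mono (nhdsWithin_mono _ Metric.ball_subset_closedBall)

end Laplacian

theorem lap_eq_laplacian {n : ℕ} {g : EuclideanSpace ℝ (Fin n) → ℝ}
    {x : EuclideanSpace ℝ (Fin n)} (hg : ContDiffAt ℝ 2 g x) : lap g x = Δ g x := by
  rw [laplacian_eq_sum_deriv_deriv (EuclideanSpace.basisFun (Fin n) ℝ) hg]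
  refine Finset.sum_congr rfl fun i _ => ?_
  rw [EuclideanSpace.basisFun_apply, ← hg.iteratedFDeriv_two_apply_eq_deriv_deriv,
    iteratedFDeriv_two_apply, fderiv_clm_apply
      ((hg.fderiv_right (m := 1) le_rfl).differentiableAt one_ne_zero) (differentiableAt_const _)]
  simp

section Barrier

variable {E : Type*} [NormedAddCommGroup E] [InnerProductSpace ℝ E]

/- For `e = e_N`, `A = 2 C₁` and `c = A (α + N - 1) / α`, where `N = finrank ℝ E`, this is the
barrier `v` of the paper. -/
noncomputable def hopfBarrier (e : E) (c A α : ℝ) (y : E) : ℝ :=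
  ⟪e, y⟫ + c * ⟪e, y⟫ ^ (1 + α) - A * ‖y‖ ^ (1 + α)

variable {e : E} {c A α : ℝ}

theorem continuous_hopfBarrier (hα : 0 ≤ 1 + α) : Continuous (hopfBarrier e c A α) := by
  have hpow := Real.continuous_rpow_const hα
  unfold hopfBarrier
  fun_prop

theorem contDiffAt_hopfBarrier {x : E} (hx : 0 < ⟪e, x⟫) :
    ContDiffAt ℝ 2 (hopfBarrier e c A α) x := by
  have hx0 : x ≠ 0 := by rintro rfl; simp at hx
  have hinner : ContDiffAt ℝ 2 (fun y => ⟪e, y⟫) x := contDiffAt_const.inner ℝ contDiffAt_id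
  exact (hinner.add (contDiffAt_const.mul (hinner.rpow_const_of_ne hx.ne'))).sub
    (contDiffAt_const.mul ((contDiffAt_norm ℝ hx0).rpow_const_of_ne (norm_ne_zero_iff.2 hx0)))

theorem hopfBarrier_le {ρ : ℝ} (hα : 0 ≤ α) (hc : 0 ≤ c) (hcρ : c * ρ ^ α ≤ 1) {x : E}
    (hx : 0 ≤ ⟪e, x⟫) (hxρ : ⟪e, x⟫ ≤ ρ) :
    hopfBarrier e c A α x ≤ 2 * ⟪e, x⟫ - A * ‖x‖ ^ (1 + α) := by
  have hcx : c * ⟪e, x⟫ ^ α ≤ 1 := (mul_le_mul_of_nonneg_left (by gcongr) hc).trans hcρ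
  have : c * ⟪e, x⟫ ^ (1 + α) ≤ ⟪e, x⟫ := by
    rw [Real.rpow_add_of_nonneg hx zero_le_one hα, Real.rpow_one]
    nlinarith
  unfold hopfBarrier
  linarith

theorem hopfBarrier_nonpos {ρ C₀ : ℝ} (hA : 2 * C₀ ≤ A) (hα : 0 ≤ α) (hc : 0 ≤ c)
    (hcρ : c * ρ ^ α ≤ 1) {x : E} (hx : 0 ≤ ⟪e, x⟫) (hxρ : ⟪e, x⟫ ≤ ρ)
    (hgraph : ⟪e, x⟫ ≤ C₀ * ‖x‖ ^ (1 + α)) : hopfBarrier e c A α x ≤ 0 := by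
  have := hopfBarrier_le (A := A) hα hc hcρ hx hxρ
  nlinarith [Real.rpow_nonneg (norm_nonneg x) (1 + α)]

theorem le_hopfBarrier_smul (he : ‖e‖ = 1) (hAc : A ≤ c) {t : ℝ} (ht : 0 ≤ t) :
    t ≤ hopfBarrier e c A α (t • e) := by
  have hinner : ⟪e, t • e⟫ = t := by
    rw [inner_smul_right, real_inner_self_eq_norm_sq, he]
    ring
  have hnorm : ‖t • e‖ = t := by rw [norm_smul, he, Real.norm_of_nonneg ht, mul_one]
  unfold hopfBarrier
  rw [hinner, hnorm]
  nlinarith [Real.rpow_nonneg ht (1 + α)]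

theorem laplacian_hopfBarrier_nonneg [FiniteDimensional ℝ E] (he : ‖e‖ = 1) (hc : 0 ≤ c)
    (hα₀ : 0 ≤ α) (hα₁ : α ≤ 1) (hcA : c * α = A * (α + finrank ℝ E - 1)) {x : E}
    (hx : 0 < ⟪e, x⟫) : 0 ≤ Δ (hopfBarrier e c A α) x := by
  have hx0 : x ≠ 0 := by rintro rfl; simp at hx
  have hinner : ContDiffAt ℝ 2 (fun y => ⟪e, y⟫) x := contDiffAt_const.inner ℝ contDiffAt_id
  have hpow : ContDiffAt ℝ 2 (fun y => ⟪e, y⟫ ^ (1 + α)) x := hinner.rpow_const_of_ne hx.ne'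
  have hnorm : ContDiffAt ℝ 2 (fun y : E => ‖y‖ ^ (1 + α)) x :=
    (contDiffAt_norm ℝ hx0).rpow_const_of_ne (norm_ne_zero_iff.2 hx0)
  have hcpow : ContDiffAt ℝ 2 (c • fun y => ⟪e, y⟫ ^ (1 + α)) x := hpow.const_smul c
  have hAnorm : ContDiffAt ℝ 2 (A • fun y : E => ‖y‖ ^ (1 + α)) x := hnorm.const_smul A
  have hsum : ContDiffAt ℝ 2 ((fun y => ⟪e, y⟫) + c • fun y => ⟪e, y⟫ ^ (1 + α)) x :=
    hinner.add hcpow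
  have hlin : Δ (fun y => ⟪e, y⟫) x = 0 := by
    simpa using laplacian_inner_rpow he hx 1
  have hsplit : hopfBarrier e c A α =
      (fun y => ⟪e, y⟫) + c • (fun y => ⟪e, y⟫ ^ (1 + α)) - A • fun y : E => ‖y‖ ^ (1 + α) := by
    ext y
    simp [hopfBarrier]
  rw [hsplit, hsum.laplacian_sub hAnorm, hinner.laplacian_add hcpow, laplacian_smul c hpow,
    laplacian_smul A hnorm, hlin, laplacian_inner_rpow he hx, laplacian_norm_rpow hx0,
    smul_eq_mul, smul_eq_mul, show 1 + α - 2 = α - 1 by ring]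
  have hmono : ‖x‖ ^ (α - 1) ≤ ⟪e, x⟫ ^ (α - 1) :=
    Real.rpow_le_rpow_of_nonpos hx (by simpa [he] using real_inner_le_norm e x) (by linarith)
  have key : 0 ≤ (1 + α) * (c * α) * (⟪e, x⟫ ^ (α - 1) - ‖x‖ ^ (α - 1)) := by
    have := mul_nonneg hc hα₀
    have := sub_nonneg.2 hmono
    positivity
  linear_combination key - (1 + α) * ‖x‖ ^ (α - 1) * hcA

end Barrier

section HopfDomain

variable {d : ℕ} {r₀ C₀ α : ℝ}

noncomputable def hopfGraph (d : ℕ) (C₀ α : ℝ) (x : EuclideanSpace ℝ (Fin (d + 1))) : ℝ :=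
  C₀ * √(∑ i : Fin d, x (Fin.castSucc i) ^ 2) ^ (1 + α)

theorem mem_hopfDomain {x : EuclideanSpace ℝ (Fin (d + 1))} :
    x ∈ hopfDomain d r₀ C₀ α ↔ ‖x‖ < r₀ ∧ hopfGraph d C₀ α x < x (Fin.last d) := by
  rw [← mem_ball_zero_iff]
  rfl

theorem hopfGraph_nonneg (hC₀ : 0 ≤ C₀) (x : EuclideanSpace ℝ (Fin (d + 1))) :
    0 ≤ hopfGraph d C₀ α x :=
  mul_nonneg hC₀ (Real.rpow_nonneg (Real.sqrt_nonneg _) _)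

theorem hopfGraph_le (hC₀ : 0 ≤ C₀) (hα : 0 ≤ 1 + α) (x : EuclideanSpace ℝ (Fin (d + 1))) :
    hopfGraph d C₀ α x ≤ C₀ * ‖x‖ ^ (1 + α) := by
  have hsqrt : √(∑ i : Fin d, x (Fin.castSucc i) ^ 2) ≤ ‖x‖ := by
    rw [EuclideanSpace.norm_eq, Fin.sum_univ_castSucc]
    simp only [Real.norm_eq_abs, sq_abs]
    exact Real.sqrt_le_sqrt (le_add_of_nonneg_right (sq_nonneg _))
  unfold hopfGraph
  gcongr

theorem hopfGraph_smul_single_last (hα : 1 + α ≠ 0) (t : ℝ) :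
    hopfGraph d C₀ α (t • EuclideanSpace.single (Fin.last d) 1) = 0 := by
  simp [hopfGraph, (Fin.castSucc_lt_last _).ne, Real.zero_rpow hα]

theorem continuous_hopfGraph (hα : 0 ≤ 1 + α) : Continuous (hopfGraph d C₀ α) := by
  have hpow := Real.continuous_rpow_const hα
  unfold hopfGraph
  fun_prop

theorem isOpen_hopfDomain (hα : 0 ≤ 1 + α) : IsOpen (hopfDomain d r₀ C₀ α) :=
  isOpen_ball.inter
    (isOpen_lt (continuous_hopfGraph hα) (EuclideanSpace.proj (Fin.last d)).continuous)

theorem last_pos_of_mem_hopfDomain (hC₀ : 0 ≤ C₀) {x : EuclideanSpace ℝ (Fin (d + 1))}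
    (hx : x ∈ hopfDomain d r₀ C₀ α) : 0 < x (Fin.last d) :=
  (hopfGraph_nonneg hC₀ x).trans_lt (mem_hopfDomain.1 hx).2

theorem last_le_norm (x : EuclideanSpace ℝ (Fin (d + 1))) : x (Fin.last d) ≤ ‖x‖ :=
  (Real.le_norm_self _).trans (PiLp.norm_apply_le x _)

theorem inner_single_last (x : EuclideanSpace ℝ (Fin (d + 1))) :
    ⟪EuclideanSpace.single (Fin.last d) 1, x⟫ = x (Fin.last d) := by
  simp [EuclideanSpace.inner_single_left]

theorem smul_single_last_mem_hopfDomain_inter_ball (hα : 1 + α ≠ 0) {ρ h : ℝ} (hρ : ρ ≤ r₀)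
    (hh : h ∈ Ioo 0 ρ) :
    h • EuclideanSpace.single (Fin.last d) 1 ∈ hopfDomain d r₀ C₀ α ∩ ball 0 ρ := by
  have hnorm : ‖h • EuclideanSpace.single (Fin.last d) (1 : ℝ)‖ = h := by
    simp [norm_smul, hh.1.le]
  refine ⟨mem_hopfDomain.2 ⟨by linarith [hh.2], ?_⟩, by rw [mem_ball_zero_iff, hnorm]; exact hh.2⟩
  simpa [hopfGraph_smul_single_last hα] using hh.1

theorem mem_frontier_hopfDomain_inter_ball (hα : 0 ≤ 1 + α) {ρ : ℝ} (hρ : ρ < r₀)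
    {p : EuclideanSpace ℝ (Fin (d + 1))} (hp : p ∈ frontier (hopfDomain d r₀ C₀ α ∩ ball 0 ρ)) :
    (p ∈ hopfDomain d r₀ C₀ α ∧ ‖p‖ = ρ) ∨ (‖p‖ ≤ ρ ∧ p (Fin.last d) = hopfGraph d C₀ α p) := by
  rw [((isOpen_hopfDomain hα).inter isOpen_ball).frontier_eq] at hp
  obtain ⟨hcl, hnot⟩ := hp
  have hclosure : closure (hopfDomain d r₀ C₀ α ∩ ball 0 ρ) ⊆
      closedBall 0 ρ ∩ {x | hopfGraph d C₀ α x ≤ x (Fin.last d)} :=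
    closure_minimal (fun x hx => ⟨ball_subset_closedBall hx.2, (mem_hopfDomain.1 hx.1).2.le⟩)
      (isClosed_closedBall.inter
        (isClosed_le (continuous_hopfGraph hα) (EuclideanSpace.proj (Fin.last d)).continuous))
  obtain ⟨hpρ, hpgraph⟩ := hclosure hcl
  rw [mem_closedBall_zero_iff] at hpρ
  by_cases hpD : p ∈ hopfDomain d r₀ C₀ α
  · exact .inl ⟨hpD, hpρ.antisymm (not_lt.1 fun h => hnot ⟨hpD, mem_ball_zero_iff.2 h⟩)⟩
  · exact .inr ⟨hpρ,
      (not_lt.1 fun h => hpD (mem_hopfDomain.2 ⟨hpρ.trans_lt hρ, h⟩)).antisymm hpgraph⟩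

theorem closedBall_subset_hopfDomain (hC₀ : 0 ≤ C₀) (hα₀ : 0 ≤ α) (hα₁ : α ≤ 1) {ρ : ℝ}
    (hρ : 0 < ρ) (hρr₀ : 2 * ρ ≤ r₀) {x : EuclideanSpace ℝ (Fin (d + 1))} (hxρ : ‖x‖ ≤ ρ)
    (hx : 8 * C₀ * ρ ^ (1 + α) < x (Fin.last d)) :
    closedBall x (x (Fin.last d) / 2) ⊆ hopfDomain d r₀ C₀ α := by
  intro y hy
  rw [mem_closedBall, dist_eq_norm] at hy
  have hylast : |y (Fin.last d) - x (Fin.last d)| ≤ ‖y - x‖ := by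
    simpa using PiLp.norm_apply_le (y - x) (Fin.last d)
  have hyρ : ‖y‖ ≤ 3 / 2 * ρ := by linarith [norm_le_insert' y x, last_le_norm x]
  have htwo : (2 : ℝ) ^ (1 + α) ≤ 4 := by
    calc (2 : ℝ) ^ (1 + α) ≤ 2 ^ (2 : ℝ) :=
          Real.rpow_le_rpow_of_exponent_le (by norm_num) (by linarith)
      _ = 4 := by norm_num
  refine mem_hopfDomain.2 ⟨by linarith, ?_⟩
  calc hopfGraph d C₀ α y ≤ C₀ * ‖y‖ ^ (1 + α) := hopfGraph_le hC₀ (by linarith) y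
    _ ≤ C₀ * (2 * ρ) ^ (1 + α) := by gcongr; linarith
    _ = C₀ * 2 ^ (1 + α) * ρ ^ (1 + α) := by rw [Real.mul_rpow zero_le_two hρ.le]; ring
    _ ≤ C₀ * 4 * ρ ^ (1 + α) := by gcongr
    _ < y (Fin.last d) := by linarith [abs_le.1 hylast]

theorem hopfBarrier_nonpos_of_last_eq_hopfGraph {ρ c A : ℝ} (hC₀ : 0 ≤ C₀) (hα : 0 ≤ α)
    (hc : 0 ≤ c) (hcρ : c * ρ ^ α ≤ 1) (hA : 2 * C₀ ≤ A) {p : EuclideanSpace ℝ (Fin (d + 1))}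
    (hpρ : ‖p‖ ≤ ρ) (hpg : p (Fin.last d) = hopfGraph d C₀ α p) :
    hopfBarrier (EuclideanSpace.single (Fin.last d) 1) c A α p ≤ 0 := by
  refine hopfBarrier_nonpos (C₀ := C₀) hA hα hc hcρ ?_ ?_ ?_ <;> rw [inner_single_last]
  · exact hpg ▸ hopfGraph_nonneg hC₀ p
  · exact (last_le_norm p).trans hpρ
  · exact hpg ▸ hopfGraph_le hC₀ (by linarith) p

/- Where the barrier is positive on the sphere, `x` lies at height `X > 8 (C₀ + 1) ρ^{1+α}`, so
the ball of radius `X / 2` stays in the domain and the paraboloid comparison on it gives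
`u x ≥ β X² / 4` with `β = c₀ / (4 (d + 1))`, which dominates `ε v(x) ≤ 2 ε X`. -/
theorem mul_hopfBarrier_le_of_norm_eq {c₀ ρ c A : ℝ} (hc₀ : 0 < c₀) (hC₀ : 0 ≤ C₀)
    (hα₀ : 0 ≤ α) (hα₁ : α ≤ 1) (hρ : 0 < ρ) (hρr₀ : 2 * ρ ≤ r₀) (hc : 0 ≤ c)
    (hcρ : c * ρ ^ α ≤ 1) (hA : 16 * (C₀ + 1) ≤ A) {u : EuclideanSpace ℝ (Fin (d + 1)) → ℝ}
    (hu : ContDiffOn ℝ 2 u (hopfDomain d r₀ C₀ α)) (hupos : ∀ x ∈ hopfDomain d r₀ C₀ α, 0 < u x)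
    (hΔu : ∀ x ∈ hopfDomain d r₀ C₀ α, Δ u x ≤ -c₀) {x : EuclideanSpace ℝ (Fin (d + 1))}
    (hxD : x ∈ hopfDomain d r₀ C₀ α) (hxρ : ‖x‖ = ρ) :
    c₀ / (4 * (d + 1)) * (C₀ + 1) * ρ ^ (1 + α) *
      hopfBarrier (EuclideanSpace.single (Fin.last d) 1) c A α x ≤ u x := by
  set X := x (Fin.last d)
  set β := c₀ / (4 * (d + 1))
  set b := hopfBarrier (EuclideanSpace.single (Fin.last d) 1) c A α x
  have hX : 0 < X := last_pos_of_mem_hopfDomain hC₀ hxD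
  have hβ : 0 < β := by positivity
  have hρα : 0 < ρ ^ (1 + α) := by positivity
  have hb : b ≤ 2 * X - A * ρ ^ (1 + α) := by
    have := hopfBarrier_le (A := A) hα₀ hc hcρ (by rw [inner_single_last]; exact hX.le)
      (by rw [inner_single_last, ← hxρ]; exact last_le_norm x)
    rwa [inner_single_last, hxρ] at this
  rcases le_or_gt b 0 with hb0 | hb0
  · exact (mul_nonpos_of_nonneg_of_nonpos (by positivity) hb0).trans (hupos x hxD).le
  have hXbig : 8 * (C₀ + 1) * ρ ^ (1 + α) < X := by nlinarith
  have hball := closedBall_subset_hopfDomain hC₀ hα₀ hα₁ hρ hρr₀ hxρ.le (by nlinarith)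
  have hux : β * (X / 2) ^ 2 ≤ u x := by
    refine mul_sq_le_of_laplacian_lt (half_pos hX) (hu.mono hball)
      (fun y hy => (hupos y (hball (sphere_subset_closedBall hy))).le) fun y hy => ?_
    have hβc₀ : 2 * ((d + 1 : ℕ) : ℝ) * β = c₀ / 2 := by
      simp only [β]
      push_cast
      field_simp
      ring
    rw [finrank_euclideanSpace_fin, hβc₀]
    linarith [hΔu y (hball (ball_subset_closedBall hy))]
  calc β * (C₀ + 1) * ρ ^ (1 + α) * b ≤ β * (C₀ + 1) * ρ ^ (1 + α) * (2 * X) := by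
        gcongr
        linarith [mul_nonneg (by linarith : (0 : ℝ) ≤ A) hρα.le]
    _ ≤ β * (X / 2) ^ 2 := by
        nlinarith [mul_le_mul_of_nonneg_left hXbig.le (mul_nonneg hβ.le hX.le)]
    _ ≤ u x := hux

theorem laplacian_sub_smul_hopfBarrier_neg {c₀ c A ε : ℝ} (hc₀ : 0 < c₀) (hC₀ : 0 ≤ C₀)
    (hα₀ : 0 ≤ α) (hα₁ : α ≤ 1) (hc : 0 ≤ c) (hcA : c * α = A * (α + d)) (hε : 0 ≤ ε)
    {u : EuclideanSpace ℝ (Fin (d + 1)) → ℝ} (hu : ContDiffOn ℝ 2 u (hopfDomain d r₀ C₀ α))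
    (hΔu : ∀ x ∈ hopfDomain d r₀ C₀ α, Δ u x ≤ -c₀) {y : EuclideanSpace ℝ (Fin (d + 1))}
    (hy : y ∈ hopfDomain d r₀ C₀ α) :
    Δ (u - ε • hopfBarrier (EuclideanSpace.single (Fin.last d) (1 : ℝ)) c A α) y < 0 := by
  have hy₀ : 0 < ⟪EuclideanSpace.single (Fin.last d) 1, y⟫ := by
    rw [inner_single_last]
    exact last_pos_of_mem_hopfDomain hC₀ hy
  have huy := hu.contDiffAt ((isOpen_hopfDomain (by linarith)).mem_nhds hy)
  have hby := contDiffAt_hopfBarrier (c := c) (A := A) (α := α) hy₀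
  have hεby : ContDiffAt ℝ 2
      (ε • hopfBarrier (EuclideanSpace.single (Fin.last d) 1) c A α) y := hby.const_smul ε
  have hΔb := laplacian_hopfBarrier_nonneg (A := A) (by simp) hc hα₀ hα₁
    (by rw [finrank_euclideanSpace_fin]; push_cast; linear_combination hcA) hy₀
  rw [huy.laplacian_sub hεby, laplacian_smul ε hby, smul_eq_mul]
  nlinarith [hΔu y hy, mul_nonneg hε hΔb]

theorem mul_hopfBarrier_le_of_mem_ball {c₀ ρ c A : ℝ} (hc₀ : 0 < c₀) (hC₀ : 0 ≤ C₀)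
    (hα₀ : 0 ≤ α) (hα₁ : α ≤ 1) (hρ : 0 < ρ) (hρr₀ : 2 * ρ ≤ r₀) (hc : 0 ≤ c)
    (hcρ : c * ρ ^ α ≤ 1) (hA : 16 * (C₀ + 1) ≤ A) (hcA : c * α = A * (α + d))
    {u : EuclideanSpace ℝ (Fin (d + 1)) → ℝ}
    (hu : ContDiffOn ℝ 2 u (hopfDomain d r₀ C₀ α)) (hupos : ∀ x ∈ hopfDomain d r₀ C₀ α, 0 < u x)
    (hΔu : ∀ x ∈ hopfDomain d r₀ C₀ α, Δ u x ≤ -c₀) {x : EuclideanSpace ℝ (Fin (d + 1))}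
    (hx : x ∈ hopfDomain d r₀ C₀ α ∩ ball 0 ρ) :
    c₀ / (4 * (d + 1)) * (C₀ + 1) * ρ ^ (1 + α) *
      hopfBarrier (EuclideanSpace.single (Fin.last d) 1) c A α x ≤ u x := by
  set e : EuclideanSpace ℝ (Fin (d + 1)) := EuclideanSpace.single (Fin.last d) 1
  set ε := c₀ / (4 * (d + 1)) * (C₀ + 1) * ρ ^ (1 + α)
  have hε : 0 < ε := by positivity
  have hDopen := isOpen_hopfDomain (r₀ := r₀) (C₀ := C₀) (d := d) (by linarith : 0 ≤ 1 + α)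
  have hDpos : ∀ y ∈ hopfDomain d r₀ C₀ α, 0 < ⟪e, y⟫ := fun y hy => by
    rw [inner_single_last]
    exact last_pos_of_mem_hopfDomain hC₀ hy
  have hb : ContDiffOn ℝ 2 (ε • hopfBarrier e c A α) (hopfDomain d r₀ C₀ α ∩ ball 0 ρ) :=
    fun y hy => ((contDiffAt_hopfBarrier (hDpos y hy.1)).const_smul ε).contDiffWithinAt
  have hbcont : Continuous (hopfBarrier e c A α) := continuous_hopfBarrier (by linarith)
  suffices 0 ≤ (u - ε • hopfBarrier e c A α) x by simpa using this
  refine nonneg_of_laplacian_neg (w := u - ε • hopfBarrier e c A α)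
    (hDopen.inter isOpen_ball) (isBounded_ball.subset inter_subset_right)
    ((hu.mono inter_subset_left).sub hb)
    (fun y hy => laplacian_sub_smul_hopfBarrier_neg hc₀ hC₀ hα₀ hα₁ hc hcA hε.le hu hΔu hy.1)
    (fun p hp m hm => ?_) hx
  rcases mem_frontier_hopfDomain_inter_ball (by linarith) (by linarith) hp with
    ⟨hpD, hpρ⟩ | ⟨hpρ, hpg⟩
  · have hcont : ContinuousAt (u - ε • hopfBarrier e c A α) p :=
      (hu.contDiffAt (hDopen.mem_nhds hpD)).continuousAt.sub (hbcont.const_smul ε).continuousAt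
    have := mul_hopfBarrier_le_of_norm_eq hc₀ hC₀ hα₀ hα₁ hρ hρr₀ hc hcρ hA hu hupos hΔu
      hpD hpρ
    exact nhdsWithin_le_nhds (hcont.eventually (lt_mem_nhds (by simpa using by linarith)))
  · have hbp := hopfBarrier_nonpos_of_last_eq_hopfGraph (A := A) hC₀ hα₀ hc hcρ
      (by linarith) hpρ hpg
    have hev : ∀ᶠ y in 𝓝 p, ε * hopfBarrier e c A α y < -m :=
      (continuous_const.mul hbcont).continuousAt.eventually (gt_mem_nhds
        (show ε * hopfBarrier e c A α p < -m by
          nlinarith [mul_nonpos_of_nonneg_of_nonpos hε.le hbp]))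
    filter_upwards [nhdsWithin_le_nhds hev, self_mem_nhdsWithin] with y hy hyU
    simp only [Pi.sub_apply, Pi.smul_apply, smul_eq_mul]
    linarith [hupos y hyU.1]

end HopfDomain

/-- quantitative Hopf lemma on a `C^{1,α}` graph domain. -/
theorem quantitative_hopf {d : ℕ} (r₀ c₀ C₀ α : ℝ)
    (hr₀ : 0 < r₀) (hc₀ : 0 < c₀) (hC₀ : 0 < C₀) (hα : α ∈ Set.Ioo (0:ℝ) 1) :
    ∃ ε > (0:ℝ), ∃ δ > (0:ℝ),
      ∀ u : EuclideanSpace ℝ (Fin (d + 1)) → ℝ,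
        ContDiffOn ℝ 2 u (hopfDomain d r₀ C₀ α) →
        (∀ x ∈ hopfDomain d r₀ C₀ α, 0 < u x) →
        (∀ x ∈ hopfDomain d r₀ C₀ α, lap u x ≤ -c₀) →
        u 0 = 0 →
        ∀ h ∈ Set.Ioo (0:ℝ) δ,
          ε * h ≤ u (h • EuclideanSpace.single (Fin.last d) 1) := by
  obtain ⟨hα₀, hα₁⟩ := hα
  set A := 16 * (C₀ + 1)
  set c := A * (α + d) / α
  set ρ := min (r₀ / 2) (c⁻¹ ^ α⁻¹)
  have hc : 0 < c := by positivity
  have hAc : A ≤ c := (le_div_iff₀ hα₀).2 (by nlinarith [d.cast_nonneg (α := ℝ)])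
  have hρ : 0 < ρ := lt_min (by positivity) (by positivity)
  have hρr₀ : 2 * ρ ≤ r₀ := by linarith [min_le_left (r₀ / 2) (c⁻¹ ^ α⁻¹)]
  have hcρ : c * ρ ^ α ≤ 1 :=
    calc c * ρ ^ α ≤ c * (c⁻¹ ^ α⁻¹) ^ α := by gcongr; exact min_le_right _ _
      _ = 1 := by rw [Real.rpow_inv_rpow (inv_nonneg.2 hc.le) hα₀.ne', mul_inv_cancel₀ hc.ne']
  refine ⟨c₀ / (4 * (d + 1)) * (C₀ + 1) * ρ ^ (1 + α), by positivity, ρ, hρ,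
    fun u hu hupos hlap _ h hh => ?_⟩
  have hΔu : ∀ x ∈ hopfDomain d r₀ C₀ α, Δ u x ≤ -c₀ := fun x hx =>
    lap_eq_laplacian (hu.contDiffAt ((isOpen_hopfDomain (by linarith)).mem_nhds hx)) ▸ hlap x hx
  have hmem : h • EuclideanSpace.single (Fin.last d) 1 ∈ hopfDomain d r₀ C₀ α ∩ ball 0 ρ :=
    smul_single_last_mem_hopfDomain_inter_ball (by linarith : 0 < 1 + α).ne' (by linarith) hh
  calc _ ≤ c₀ / (4 * (d + 1)) * (C₀ + 1) * ρ ^ (1 + α) *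
        hopfBarrier (EuclideanSpace.single (Fin.last d) 1) c A α
          (h • EuclideanSpace.single (Fin.last d) 1) :=
        mul_le_mul_of_nonneg_left (le_hopfBarrier_smul (by simp) hAc hh.1.le) (by positivity)
    _ ≤ _ := mul_hopfBarrier_le_of_mem_ball hc₀ hC₀.le hα₀.le hα₁.le hρ hρr₀ hc.le hcρ le_rfl
        (div_mul_cancel₀ _ hα₀.ne') hu hupos hΔu hmem
end

section
/- Suppose for every compact K ⊂ Σ ⊂ ℝ^d, the Lipschitz function T : ℝ^d → ℝ satisfies limsup_{x,y ∈ K, |x-y|→0} |T(x)-T(y)|/|x-y| = 0, and Σ is contained in countably many C¹ hypersurfaces. Then for almost every t, the level set Σ ∩ T^{-1}(t) has zero (d-2)-dimensional Hausdorff measure, provided Σ^{d-2}-type strata contribute to positive measure for at most countably many t. -/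
open MeasureTheory Metric Set
open scoped MeasureTheory

open scoped ENNReal NNReal RealInnerProductSpace
open Module

/-!
A `C¹` hypersurface is, near each of its points, bi-Lipschitz to a hyperplane through the
orthogonal projection onto the tangent space, so `Σ` is covered by countably many sets `G` with
`H^{d-1}(G) < ∞`. Eilenberg's inequality `a · |{t | H^s(A ∩ T⁻¹ t) > a}| ≤ ε H^{s+1}(A)` holds
whenever `T` is `ε`-Lipschitz on all small subsets of `A`: a fibre `A ∩ T⁻¹ t` is covered by the
members `c` of an `r`-cover of `A` with `t ∈ T(c)`, a set of length at most `ε diam c`.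
On `Σ` the Lipschitz constant of `T` vanishes at small scales, so every `ε > 0` is admissible and
the level sets of `Σ ∩ G` are `H^{d-2}`-null for almost every `t`.
-/

section HausdorffApprox

variable {X : Type*} [EMetricSpace X]

/-- The `r`-approximate Hausdorff measure `H^s_r`. -/
noncomputable def hausdorffApprox (s : ℝ) (r : ℝ≥0∞) (B : Set X) : ℝ≥0∞ :=
  ⨅ (c : ℕ → Set X) (_ : B ⊆ ⋃ n, c n) (_ : ∀ n, ediam (c n) ≤ r),
    ∑' n, ⨆ _ : (c n).Nonempty, ediam (c n) ^ s

theorem hausdorffApprox_anti (s : ℝ) {r r' : ℝ≥0∞} (h : r ≤ r') (B : Set X) :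
    hausdorffApprox s r' B ≤ hausdorffApprox s r B :=
  le_iInf₂ fun c hc => le_iInf fun hcr =>
    iInf₂_le_of_le c hc (iInf_le_of_le (fun n => (hcr n).trans h) le_rfl)

variable [MeasurableSpace X] [BorelSpace X]

theorem hausdorffApprox_le_hausdorffMeasure (s : ℝ) {r : ℝ≥0∞} (hr : 0 < r) (B : Set X) :
    hausdorffApprox s r B ≤ μH[s] B := by
  rw [Measure.hausdorffMeasure_apply]
  exact le_iSup₂ (f := fun r (_ : 0 < r) => hausdorffApprox s r B) r hr

theorem lt_hausdorffMeasure_iff {s : ℝ} {B : Set X} {a : ℝ≥0∞} :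
    a < μH[s] B ↔ ∃ n : ℕ, a < hausdorffApprox s (n : ℝ≥0∞)⁻¹ B := by
  constructor
  · intro h
    rw [Measure.hausdorffMeasure_apply] at h
    simp only [lt_iSup_iff] at h
    obtain ⟨r, hr, h⟩ := h
    obtain ⟨n, hn⟩ := ENNReal.exists_inv_nat_lt hr.ne'
    exact ⟨n, h.trans_le (hausdorffApprox_anti s hn.le B)⟩
  · rintro ⟨n, h⟩
    exact h.trans_le
      (hausdorffApprox_le_hausdorffMeasure s (ENNReal.inv_pos.2 (ENNReal.natCast_ne_top n)) B)

end HausdorffApprox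

theorem LipschitzOnWith.ediam_image_le {α β : Type*} [PseudoEMetricSpace α]
    [PseudoEMetricSpace β] {K : ℝ≥0} {f : α → β} {s : Set α} (hf : LipschitzOnWith K f s) :
    ediam (f '' s) ≤ K * ediam s :=
  ediam_image_le_iff.2 fun _ hx _ hy =>
    (hf hx hy).trans (mul_le_mul_right (edist_le_ediam_of_mem hx hy) _)

section Eilenberg

variable {X : Type*} [EMetricSpace X]

theorem hausdorffApprox_inter_preimage_le {s : ℝ} (hs : 0 ≤ s) {r : ℝ≥0∞} {A : Set X}
    {c : ℕ → Set X} (hAc : A ⊆ ⋃ n, c n) (hc : ∀ n, ediam (c n) ≤ r) (T : X → ℝ) (t : ℝ) :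
    hausdorffApprox s r (A ∩ T ⁻¹' {t}) ≤
      ∑' n, (toMeasurable volume (T '' c n)).indicator (fun _ => ediam (c n) ^ s) t := by
  refine iInf₂_le_of_le (fun n => c n ∩ T ⁻¹' {t}) ?_
    (iInf_le_of_le (fun n => (ediam_mono inter_subset_left).trans (hc n)) ?_)
  · rintro x ⟨hxA, hxt⟩
    obtain ⟨n, hn⟩ := mem_iUnion.1 (hAc hxA)
    exact mem_iUnion.2 ⟨n, hn, hxt⟩
  · refine ENNReal.tsum_le_tsum fun n => iSup_le fun hne => ?_
    obtain ⟨x, hxc, hxt⟩ := hne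
    have ht : t ∈ T '' c n := ⟨x, hxc, hxt⟩
    rw [indicator_of_mem (subset_toMeasurable _ _ ht)]
    exact ENNReal.rpow_le_rpow (ediam_mono inter_subset_left) hs

theorem lintegral_tsum_indicator_image_le {s : ℝ} (hs : 0 ≤ s) {c : ℕ → Set X} {T : X → ℝ}
    {ε : ℝ≥0} (hT : ∀ n, LipschitzOnWith ε T (c n)) :
    ∫⁻ t, ∑' n, (toMeasurable volume (T '' c n)).indicator (fun _ => ediam (c n) ^ s) t ≤
      ε * ∑' n, ⨆ _ : (c n).Nonempty, ediam (c n) ^ (s + 1) := by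
  rw [lintegral_tsum fun n =>
      (measurable_const.indicator (measurableSet_toMeasurable _ _)).aemeasurable,
    ← ENNReal.tsum_mul_left]
  refine ENNReal.tsum_le_tsum fun n => ?_
  rw [lintegral_indicator_const (measurableSet_toMeasurable _ _), measure_toMeasurable]
  rcases (c n).eq_empty_or_nonempty with hc | hc
  · simp [hc]
  rw [iSup_pos hc, ENNReal.rpow_add_of_nonneg _ _ hs zero_le_one, ENNReal.rpow_one]
  calc ediam (c n) ^ s * volume (T '' c n) ≤ ediam (c n) ^ s * (ε * ediam (c n)) := by
        gcongr
        exact (Real.volume_le_diam _).trans (hT n).ediam_image_le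
    _ = ε * (ediam (c n) ^ s * ediam (c n)) := by ring

theorem mul_volume_lt_hausdorffApprox_inter_preimage_le {s : ℝ} (hs : 0 ≤ s) {r : ℝ≥0∞}
    {A : Set X} {T : X → ℝ} {ε : ℝ≥0} (hε : ε ≠ 0)
    (hA : ∀ c ⊆ A, ediam c ≤ r → LipschitzOnWith ε T c) (a : ℝ≥0∞) :
    a * volume {t | a < hausdorffApprox s r (A ∩ T ⁻¹' {t})} ≤
      ε * hausdorffApprox (s + 1) r A := by
  simp only [hausdorffApprox.eq_1 (s + 1),
    ENNReal.mul_iInf_of_ne (ENNReal.coe_ne_zero.2 hε) ENNReal.coe_ne_top]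
  refine le_iInf₂ fun c hAc => le_iInf fun hcr => ?_
  set c' : ℕ → Set X := fun n => c n ∩ A
  have hAc' : A ⊆ ⋃ n, c' n := fun x hx => by
    obtain ⟨n, hn⟩ := mem_iUnion.1 (hAc hx)
    exact mem_iUnion.2 ⟨n, hn, hx⟩
  have hc'r : ∀ n, ediam (c' n) ≤ r := fun n => (ediam_mono inter_subset_left).trans (hcr n)
  calc a * volume {t | a < hausdorffApprox s r (A ∩ T ⁻¹' {t})}
      ≤ ∫⁻ t, ∑' n, (toMeasurable volume (T '' c' n)).indicator
          (fun _ => ediam (c' n) ^ s) t := by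
        refine le_trans ?_ (mul_meas_ge_le_lintegral (Measurable.tsum fun n =>
          measurable_const.indicator (measurableSet_toMeasurable _ _)) a)
        refine mul_le_mul_right (measure_mono fun t ht => ?_) a
        exact (le_of_lt ht).trans (hausdorffApprox_inter_preimage_le hs hAc' hc'r T t)
    _ ≤ ε * ∑' n, ⨆ _ : (c' n).Nonempty, ediam (c' n) ^ (s + 1) :=
        lintegral_tsum_indicator_image_le hs fun n => hA _ inter_subset_right (hc'r n)
    _ ≤ ε * ∑' n, ⨆ _ : (c n).Nonempty, ediam (c n) ^ (s + 1) := by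
        gcongr with n
        exact iSup_le fun hne => le_iSup_of_le (hne.mono inter_subset_left)
          (ENNReal.rpow_le_rpow (ediam_mono inter_subset_left) (by linarith))

variable [MeasurableSpace X] [BorelSpace X]

theorem mul_volume_lt_hausdorffMeasure_inter_preimage_le {s : ℝ} (hs : 0 ≤ s) {r₀ : ℝ≥0∞}
    (hr₀ : 0 < r₀) {A : Set X} {T : X → ℝ} {ε : ℝ≥0} (hε : ε ≠ 0)
    (hA : ∀ c ⊆ A, ediam c < r₀ → LipschitzOnWith ε T c) (a : ℝ≥0∞) :
    a * volume {t | a < μH[s] (A ∩ T ⁻¹' {t})} ≤ ε * μH[s + 1] A := by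
  obtain ⟨J, hJ⟩ := ENNReal.exists_inv_nat_lt hr₀.ne'
  set B : ℕ → Set ℝ := fun n => {t | a < hausdorffApprox s (n : ℝ≥0∞)⁻¹ (A ∩ T ⁻¹' {t})}
  have hB : Monotone B := fun m n hmn t ht =>
    ht.trans_le (hausdorffApprox_anti s (ENNReal.inv_le_inv.2 (Nat.cast_le.2 hmn)) _)
  have hunion : {t | a < μH[s] (A ∩ T ⁻¹' {t})} = ⋃ n, B n := by
    ext t
    simp only [mem_ofPred_eq, mem_iUnion, B, lt_hausdorffMeasure_iff]
  rw [hunion, hB.measure_iUnion, ENNReal.mul_iSup]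
  refine iSup_le fun n => ?_
  have hr : ((max n J : ℕ) : ℝ≥0∞)⁻¹ < r₀ :=
    (ENNReal.inv_le_inv.2 (Nat.cast_le.2 (le_max_right n J))).trans_lt hJ
  calc a * volume (B n) ≤ a * volume (B (max n J)) :=
        mul_le_mul_right (measure_mono (hB (le_max_left n J))) a
    _ ≤ ε * hausdorffApprox (s + 1) ((max n J : ℕ) : ℝ≥0∞)⁻¹ A :=
        mul_volume_lt_hausdorffApprox_inter_preimage_le hs hε
          (fun c hc hcr => hA c hc (hcr.trans_lt hr)) a
    _ ≤ ε * μH[s + 1] A :=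
        mul_le_mul_right (hausdorffApprox_le_hausdorffMeasure _
          (ENNReal.inv_pos.2 (ENNReal.natCast_ne_top _)) A) _

end Eilenberg

section Flat

variable {X : Type*} [MetricSpace X] [MeasurableSpace X] [BorelSpace X]

theorem mul_volume_lt_hausdorffMeasure_inter_preimage_le_of_flat {s : ℝ} (hs : 0 ≤ s)
    {A : Set X} {T : X → ℝ} {ε : ℝ≥0} (hε : ε ≠ 0)
    (hflat : ∀ x ∈ A, ∃ δ > 0, ∀ y ∈ A, dist x y < δ → |T x - T y| ≤ ε * dist x y)
    (a : ℝ≥0∞) :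
    a * volume {t | a < μH[s] (A ∩ T ⁻¹' {t})} ≤ ε * μH[s + 1] A := by
  set A' : ℕ → Set X := fun k =>
    {x ∈ A | ∀ y ∈ A, dist x y < (k + 1 : ℝ)⁻¹ → |T x - T y| ≤ ε * dist x y}
  have hA'A : ∀ k, A' k ⊆ A := fun k => sep_subset _ _
  have hA' : Monotone A' := fun k l hkl x hx =>
    ⟨hx.1, fun y hy hxy => hx.2 y hy (hxy.trans_le (by gcongr))⟩
  have hA'union : ⋃ k, A' k = A := by
    refine (iUnion_subset hA'A).antisymm fun x hx => ?_
    obtain ⟨δ, hδ, h⟩ := hflat x hx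
    obtain ⟨k, hk⟩ := exists_nat_one_div_lt hδ
    exact mem_iUnion.2 ⟨k, hx, fun y hy hxy => h y hy (hxy.trans (by simpa using hk))⟩
  have hfiber : ∀ t, Monotone fun k => A' k ∩ T ⁻¹' {t} := fun t k l hkl =>
    inter_subset_inter_left _ (hA' hkl)
  have hB : Monotone fun k => {t | a < μH[s] (A' k ∩ T ⁻¹' {t})} := fun k l hkl t ht =>
    ht.trans_le (measure_mono (hfiber t hkl))
  have hunion : {t | a < μH[s] (A ∩ T ⁻¹' {t})} = ⋃ k, {t | a < μH[s] (A' k ∩ T ⁻¹' {t})} := by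
    ext t
    have hUn : A ∩ T ⁻¹' {t} = ⋃ k, A' k ∩ T ⁻¹' {t} := by rw [← iUnion_inter, hA'union]
    simp only [mem_ofPred_eq, mem_iUnion, hUn, (hfiber t).measure_iUnion, lt_iSup_iff]
  rw [hunion, hB.measure_iUnion, ENNReal.mul_iSup]
  refine iSup_le fun k => le_trans ?_ (mul_le_mul_right (measure_mono (hA'A k)) _)
  refine mul_volume_lt_hausdorffMeasure_inter_preimage_le hs
    (r₀ := ENNReal.ofReal (k + 1 : ℝ)⁻¹) (ENNReal.ofReal_pos.2 (by positivity)) hε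
    (fun c hc hcr => ?_) a
  refine LipschitzOnWith.of_dist_le_mul fun x hx y hy => ?_
  exact (hc hx).2 y (hA'A k (hc hy))
    (edist_lt_ofReal.1 ((edist_le_ediam_of_mem hx hy).trans_lt hcr))

theorem ae_hausdorffMeasure_inter_preimage_eq_zero {s : ℝ} (hs : 0 ≤ s) {A : Set X}
    {T : X → ℝ}
    (hflat : ∀ x ∈ A, ∀ ε > (0 : ℝ), ∃ δ > 0, ∀ y ∈ A, dist x y < δ →
      |T x - T y| ≤ ε * dist x y)
    (hA : μH[s + 1] A ≠ ∞) :
    ∀ᵐ t, μH[s] (A ∩ T ⁻¹' {t}) = 0 := by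
  have hmul : ∀ a : ℝ≥0∞, a * volume {t | a < μH[s] (A ∩ T ⁻¹' {t})} = 0 := by
    intro a
    by_contra h
    obtain ⟨ε, hε, hlt⟩ := ENNReal.exists_nnreal_pos_mul_lt hA h
    exact ((mul_volume_lt_hausdorffMeasure_inter_preimage_le_of_flat hs hε.ne'
      (fun x hx => hflat x hx ε hε) a).trans_lt hlt).false
  rw [ae_iff]
  refine measure_mono_null (fun t ht => mem_iUnion.2 (ENNReal.exists_inv_nat_lt ht))
    (measure_iUnion_null fun n : ℕ => (mul_eq_zero.1 (hmul (n : ℝ≥0∞)⁻¹)).resolve_left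
      (ENNReal.inv_ne_zero.2 (ENNReal.natCast_ne_top n)))

end Flat

theorem exists_pos_abs_sub_le_mul_dist_of_forall_isCompact {X : Type*} [MetricSpace X]
    {S : Set X} {T : X → ℝ}
    (hflat : ∀ K ⊆ S, IsCompact K → ∀ ε > (0 : ℝ), ∃ δ > (0 : ℝ), ∀ x ∈ K, ∀ y ∈ K,
      dist x y < δ → |T x - T y| ≤ ε * dist x y)
    {x : X} (hx : x ∈ S) {ε : ℝ} (hε : 0 < ε) :
    ∃ δ > 0, ∀ y ∈ S, dist x y < δ → |T x - T y| ≤ ε * dist x y := by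
  by_contra! hbad
  choose y hyS hyx hTy using fun n : ℕ => hbad (1 / (n + 1)) Nat.one_div_pos_of_nat
  have hy : Filter.Tendsto y Filter.atTop (nhds x) := by
    refine tendsto_iff_dist_tendsto_zero.2 (squeeze_zero (fun _ => dist_nonneg) (fun n => ?_)
      tendsto_one_div_add_atTop_nhds_zero_nat)
    rw [dist_comm]
    exact (hyx n).le
  obtain ⟨δ, hδ, hK⟩ := hflat _ (insert_subset hx (range_subset_iff.2 hyS))
    hy.isCompact_insert_range ε hε
  obtain ⟨n, hn⟩ := exists_nat_one_div_lt hδ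
  exact (hTy n).not_ge (hK x (mem_insert _ _) (y n) (mem_insert_of_mem _ ⟨n, rfl⟩)
    ((hyx n).trans hn))

theorem norm_le_two_mul_norm_orthogonalProjectionOnto_orthogonal {E : Type*}
    [NormedAddCommGroup E] [InnerProductSpace ℝ E] {v w : E} (hv : v ≠ 0)
    (hw : |⟪v, w⟫| ≤ ‖v‖ / 2 * ‖w‖) :
    ‖w‖ ≤ 2 * ‖(ℝ ∙ v)ᗮ.orthogonalProjectionOnto w‖ := by
  have hv₀ : 0 < ‖v‖ := norm_pos_iff.2 hv
  have hsmul := congrArg norm (Submodule.smul_starProjection_singleton ℝ (v := v) w)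
  simp only [norm_smul, Real.norm_eq_abs, RCLike.ofReal_real_eq_id, id, abs_pow, abs_norm] at hsmul
  have hline : ‖v‖ * ‖(ℝ ∙ v).orthogonalProjectionOnto w‖ = |⟪v, w⟫| := by
    refine mul_left_cancel₀ hv₀.ne' ?_
    change ‖v‖ * (‖v‖ * ‖(ℝ ∙ v).starProjection w‖) = _
    rw [← mul_assoc, ← sq, hsmul, mul_comm]
  have hshort : ‖(ℝ ∙ v).orthogonalProjectionOnto w‖ ≤ ‖w‖ / 2 :=
    le_of_mul_le_mul_left (by rw [hline]; linarith) hv₀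
  have hpyth := Submodule.norm_sq_eq_add_norm_sq_projection w (ℝ ∙ v)
  nlinarith [norm_nonneg w, norm_nonneg ((ℝ ∙ v).orthogonalProjectionOnto w),
    norm_nonneg ((ℝ ∙ v)ᗮ.orthogonalProjectionOnto w)]

theorem exists_hausdorffMeasure_zeroSet_inter_ball_lt_top {E : Type*} [NormedAddCommGroup E]
    [InnerProductSpace ℝ E] [FiniteDimensional ℝ E] [MeasurableSpace E] [BorelSpace E]
    {f : E → ℝ} (hf : ContDiff ℝ 1 f) {x : E} (hx : fderiv ℝ f x ≠ 0) :
    ∃ r > 0, μH[(finrank ℝ E : ℝ) - 1] ({y | f y = 0} ∩ ball x r) < ∞ := by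
  obtain ⟨v, hvL, hvnorm⟩ : ∃ v : E, (∀ u, ⟪v, u⟫ = fderiv ℝ f x u) ∧ ‖v‖ = ‖fderiv ℝ f x‖ :=
    ⟨_, fun _ => InnerProductSpace.toDual_symm_apply, LinearIsometryEquiv.norm_map _ _⟩
  have hv : v ≠ 0 := norm_ne_zero_iff.1 (hvnorm ▸ norm_ne_zero_iff.2 hx)
  obtain ⟨r, hr, hfr⟩ := Metric.continuousAt_iff.1
    ((hf.continuous_fderiv one_ne_zero).continuousAt (x := x)) (‖v‖ / 2) (by positivity)
  set Z := {y | f y = 0} ∩ ball x r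
  set P := (ℝ ∙ v)ᗮ.orthogonalProjectionOnto
  have hanti : ∀ y ∈ Z, ∀ z ∈ Z, ‖z - y‖ ≤ 2 * ‖P z - P y‖ := by
    rintro y ⟨hfy : f y = 0, hy⟩ z ⟨hfz : f z = 0, hz⟩
    have hmvt := (convex_ball x r).norm_image_sub_le_of_norm_fderiv_le'
      (φ := fderiv ℝ f x) (C := ‖v‖ / 2) (fun w _ => hf.differentiable one_ne_zero w)
      (fun w hw => by rw [← dist_eq_norm]; exact (hfr (mem_ball.1 hw)).le) hy hz
    rw [← map_sub]
    refine norm_le_two_mul_norm_orthogonalProjectionOnto_orthogonal hv ?_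
    rw [hvL]
    simpa [hfy, hfz, abs_sub_comm] using hmvt
  have hpos : 0 < finrank ℝ E := Module.finrank_pos_iff_exists_ne_zero.2 ⟨v, hv⟩
  have : Fact (finrank ℝ E = (finrank ℝ E - 1) + 1) := ⟨(Nat.sub_add_cancel hpos).symm⟩
  have hdim : (finrank ℝ E : ℝ) - 1 = finrank ℝ (ℝ ∙ v)ᗮ := by
    rw [Submodule.finrank_orthogonal_span_singleton (n := finrank ℝ E - 1) hv,
      Nat.cast_sub hpos, Nat.cast_one]
  have hP : AntilipschitzWith 2 (fun z : Z => P z) :=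
    AntilipschitzWith.of_le_mul_dist fun y z => by
      simpa [Subtype.dist_eq, dist_eq_norm] using hanti z z.2 y y.2
  have hPZ : range (fun z : Z => P z) ⊆ closedBall (P x) r := by
    rintro _ ⟨z, rfl⟩
    exact ((Submodule.lipschitzWith_orthogonalProjectionOnto _).dist_le_mul (z : E) x).trans
      (by simpa using (mem_ball.1 z.2.2).le)
  refine ⟨r, hr, ?_⟩
  rw [hdim]
  calc μH[finrank ℝ (ℝ ∙ v)ᗮ] Z = μH[finrank ℝ (ℝ ∙ v)ᗮ] (univ : Set Z) := by
        rw [← (isometry_subtype_coe (s := Z)).hausdorffMeasure_image (Or.inl (Nat.cast_nonneg _)),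
          image_univ, Subtype.range_coe]
    _ ≤ 2 ^ (finrank ℝ (ℝ ∙ v)ᗮ : ℝ) * μH[finrank ℝ (ℝ ∙ v)ᗮ] (range fun z : Z => P z) := by
        rw [← image_univ]
        exact_mod_cast hP.le_hausdorffMeasure_image (Nat.cast_nonneg _) univ
    _ ≤ 2 ^ (finrank ℝ (ℝ ∙ v)ᗮ : ℝ) * μH[finrank ℝ (ℝ ∙ v)ᗮ] (closedBall (P x) r) := by
        gcongr
    _ < ∞ := ENNReal.mul_lt_top (by simp) (isCompact_closedBall _ _).measure_lt_top

theorem exists_countable_cover_hausdorffMeasure_lt_top {E : Type*} [NormedAddCommGroup E]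
    [InnerProductSpace ℝ E] [FiniteDimensional ℝ E] [MeasurableSpace E] [BorelSpace E]
    {f : E → ℝ} (hf : ContDiff ℝ 1 f) :
    ∃ 𝒢 : Set (Set E), 𝒢.Countable ∧ {x | f x = 0 ∧ fderiv ℝ f x ≠ 0} ⊆ ⋃₀ 𝒢 ∧
      ∀ G ∈ 𝒢, μH[(finrank ℝ E : ℝ) - 1] G < ∞ := by
  choose! ρ hρ hρfin using fun x (hx : x ∈ {x | f x = 0 ∧ fderiv ℝ f x ≠ 0}) =>
    exists_hausdorffMeasure_zeroSet_inter_ball_lt_top hf hx.2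
  obtain ⟨V, hVsub, hVc, hV⟩ := TopologicalSpace.countable_cover_nhdsWithin
    (f := fun x => ball x (ρ x)) fun x hx => mem_nhdsWithin_of_mem_nhds (ball_mem_nhds x (hρ x hx))
  refine ⟨(fun x => {y | f y = 0} ∩ ball x (ρ x)) '' V, hVc.image _, fun y hy => ?_, ?_⟩
  · obtain ⟨x, hxV, hyx⟩ := mem_iUnion₂.1 (hV hy)
    exact ⟨_, mem_image_of_mem _ hxV, hy.1, hyx⟩
  · rintro _ ⟨x, hxV, rfl⟩
    exact hρfin x (hVsub hxV)

theorem generic_singular_measure_general {d : ℕ} (hd : 2 ≤ d)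
    (S : Set (EuclideanSpace ℝ (Fin d))) (T : EuclideanSpace ℝ (Fin d) → ℝ)
    (hflat : ∀ Kc : Set (EuclideanSpace ℝ (Fin d)), Kc ⊆ S → IsCompact Kc →
      ∀ ε > (0:ℝ), ∃ δ > (0:ℝ), ∀ x ∈ Kc, ∀ y ∈ Kc, dist x y < δ →
        |T x - T y| ≤ ε * dist x y)
    (M : ℕ → Set (EuclideanSpace ℝ (Fin d)))
    (hM : ∀ n, ∃ f : EuclideanSpace ℝ (Fin d) → ℝ, ContDiff ℝ 1 f ∧
      ∀ x ∈ M n, f x = 0 ∧ fderiv ℝ f x ≠ 0)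
    (hcover : S ⊆ ⋃ n, M n) :
    ∀ᵐ t : ℝ, μH[(d:ℝ) - 2] (S ∩ T ⁻¹' {t}) = 0 := by
  choose f hf hfM using hM
  choose 𝒢 h𝒢 hM𝒢 h𝒢fin using fun n => exists_countable_cover_hausdorffMeasure_lt_top (hf n)
  have hdim : (d : ℝ) - 2 + 1 = (finrank ℝ (EuclideanSpace ℝ (Fin d)) : ℝ) - 1 := by
    rw [finrank_euclideanSpace_fin]
    ring
  have hnull : ∀ n, ∀ G ∈ 𝒢 n, ∀ᵐ t, μH[(d : ℝ) - 2] (S ∩ G ∩ T ⁻¹' {t}) = 0 :=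
    fun n G hG => ae_hausdorffMeasure_inter_preimage_eq_zero
      (by rw [sub_nonneg]; exact_mod_cast hd)
      (fun x hx ε hε => (exists_pos_abs_sub_le_mul_dist_of_forall_isCompact hflat hx.1 hε).imp
        fun δ ⟨hδ, h⟩ => ⟨hδ, fun y hy => h y hy.1⟩)
      (hdim ▸ ((measure_mono inter_subset_right).trans_lt (h𝒢fin n G hG)).ne)
  filter_upwards [ae_all_iff.2 fun n => (ae_ball_iff (h𝒢 n)).2 (hnull n)] with t ht
  refine measure_mono_null (fun x hx => ?_) (measure_iUnion_null fun n =>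
    (measure_biUnion_null_iff (h𝒢 n)).2 (ht n))
  obtain ⟨n, hn⟩ := mem_iUnion.1 (hcover hx.1)
  obtain ⟨G, hG, hxG⟩ := hM𝒢 n (hfM n x hn)
  exact mem_iUnion.2 ⟨n, mem_iUnion₂.2 ⟨G, hG, ⟨hx.1, hxG⟩, hx.2⟩⟩

/-- if the Lipschitz hitting time `T` has vanishing tangential
increments on compact subsets of the singular set `S`, which is covered by
countably many `C¹` hypersurfaces, then (given that the lower strata contribute
positive `H^{d-2}` measure for at most countably many times) for almost every
time `t` the level set `S ∩ T⁻¹(t)` has zero `(d-2)`-dimensional Hausdorff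
measure. -/
theorem generic_singular_measure {d : ℕ} (hd : 2 ≤ d)
    (S : Set (EuclideanSpace ℝ (Fin d))) (T : EuclideanSpace ℝ (Fin d) → ℝ)
    (K : NNReal) (hT : LipschitzWith K T)
    (hflat : ∀ Kc : Set (EuclideanSpace ℝ (Fin d)), Kc ⊆ S → IsCompact Kc →
      ∀ ε > (0:ℝ), ∃ δ > (0:ℝ), ∀ x ∈ Kc, ∀ y ∈ Kc, dist x y < δ →
        |T x - T y| ≤ ε * dist x y)
    (M : ℕ → Set (EuclideanSpace ℝ (Fin d)))
    (hM : ∀ n, ∃ f : EuclideanSpace ℝ (Fin d) → ℝ, ContDiff ℝ 1 f ∧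
      ∀ x ∈ M n, f x = 0 ∧ fderiv ℝ f x ≠ 0)
    (hcover : S ⊆ ⋃ n, M n)
    (S₂ : Set (EuclideanSpace ℝ (Fin d))) (hS₂ : S₂ ⊆ S)
    (hS₂count : Set.Countable {t : ℝ | μH[(d:ℝ) - 2] (S₂ ∩ T ⁻¹' {t}) ≠ 0}) :
    ∀ᵐ t : ℝ, μH[(d:ℝ) - 2] (S ∩ T ⁻¹' {t}) = 0 :=
  generic_singular_measure_general hd S T hflat M hM hcover
end

section
/- Let ν : U → S^{d-1} assign to each point x of a set U ⊂ ℝ^d the outward unit normal of a domain Ω_{T(x)} whose boundary near x is uniformly C^{1,α} (seminorm ≤ C), where the domains Ω_t are increasing in t and x ∈ ∂Ω_{T(x)}. Then ν is Hölder continuous with exponent α/(1+α): |ν(x) - ν(y)| ≤ C'|x-y|^{α/(1+α)} for x, y ∈ U close, with C' depending only on C and α. -/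
/-!
If `T x ≤ T y` then `Ω (T x) ⊆ Ω (T y)`. Work at the scale `h` with `h ^ (1 + α) = |x - y|`:
for a unit vector `v` with `⟪v, ν x⟫ ≤ 0`, the point `x + (h/2) v - C |x - y| ν x` lies in
`Ω (T x)` by the interior condition at `x`, hence in `closure (Ω (T y))`, so the exterior
condition at `y` forces `⟪v, ν y⟫ ≲ |x - y| / h = |x - y| ^ (α / (1 + α))`. Finally, a unit vector
`b` with `⟪v, b⟫ ≤ η` on the whole half-sphere `{⟪v, a⟫ ≤ 0}` satisfies `‖a - b‖ ≤ 3 η`.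
-/

open Metric Real
open scoped InnerProductSpace

section InnerProductSpace

variable {E : Type*} [NormedAddCommGroup E] [InnerProductSpace ℝ E]

theorem norm_sub_le_of_forall_inner_le {a b : E} (ha : ‖a‖ = 1) (hb : ‖b‖ = 1) {η : ℝ}
    (hη : 0 ≤ η) (H : ∀ v : E, ‖v‖ = 1 → ⟪v, a⟫_ℝ ≤ 0 → ⟪v, b⟫_ℝ ≤ η) :
    ‖a - b‖ ≤ 3 * η := by
  set c := ⟪a, b⟫_ℝ
  -- `w` is the component of `b` orthogonal to `a`
  set w := b - c • a
  have haa : ⟪a, a⟫_ℝ = 1 := by rw [real_inner_self_eq_norm_sq, ha, one_pow]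
  have hwa : ⟪w, a⟫_ℝ = 0 := by
    rw [inner_sub_left, real_inner_smul_left, haa, real_inner_comm]; ring
  have hwb : ⟪w, b⟫_ℝ = ‖w‖ ^ 2 := by
    rw [← real_inner_self_eq_norm_sq, inner_sub_right w b, real_inner_smul_right, hwa]; ring
  have hw_sq : ‖w‖ ^ 2 = 1 - c ^ 2 := by
    rw [← hwb, inner_sub_left, real_inner_smul_left, real_inner_self_eq_norm_sq, hb]; ring
  have hc : -η ≤ c := by
    have := H (-a) (by rw [norm_neg, ha]) (by rw [inner_neg_left, haa]; norm_num)
    rw [inner_neg_left] at this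
    linarith
  have hw : ‖w‖ ≤ η := by
    rcases eq_or_ne w 0 with hw0 | hw0
    · rwa [hw0, norm_zero]
    have hw_pos : 0 < ‖w‖ := norm_pos_iff.2 hw0
    have := H (‖w‖⁻¹ • w) (by rw [norm_smul, norm_inv, norm_norm, inv_mul_cancel₀ hw_pos.ne'])
      (by rw [real_inner_smul_left, hwa, mul_zero])
    rwa [real_inner_smul_left, hwb, pow_two, inv_mul_cancel_left₀ hw_pos.ne'] at this
  have hab_sq : ‖a - b‖ ^ 2 = 2 - 2 * c := by rw [norm_sub_sq_real, ha, hb]; ring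
  have hw_sq_le : ‖w‖ ^ 2 ≤ η ^ 2 := pow_le_pow_left₀ (norm_nonneg w) hw 2
  have hc_abs : |c| ≤ 1 := by simpa [ha, hb] using abs_real_inner_le_norm a b
  obtain ⟨hc_ge, hc_le⟩ := abs_le.1 hc_abs
  refine le_of_sq_le_sq ?_ (by positivity)
  -- for `c ≥ 0`, `‖a - b‖² ≤ 2 ‖w‖²`; for `c ≤ 0`, `1 = ‖w‖² + c² ≤ 2 η²`
  rcases le_total 0 c with hc0 | hc0
  · nlinarith [mul_nonneg hc0 (sub_nonneg.2 hc_le)]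
  · nlinarith [mul_le_mul (neg_le.1 hc) (neg_le.1 hc) (neg_nonneg.2 hc0) hη]

variable {A B : Set E} {x y νx νy : E}

theorem inner_le_of_nested_halfspaces (hAB : A ⊆ B) (hνx : ‖νx‖ = 1) (hνy : ‖νy‖ = 1)
    {h ε t : ℝ} (hε : 0 ≤ ε) (ht : 0 < t) (hth : t + ε + dist x y < h)
    (hint : ∀ z ∈ ball x h, ⟪z - x, νx⟫_ℝ ≤ -ε → z ∈ A)
    (hext : ∀ z ∈ ball y h, ε ≤ ⟪z - y, νy⟫_ℝ → z ∉ closure B)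
    {v : E} (hv : ‖v‖ = 1) (hvx : ⟪v, νx⟫_ℝ ≤ 0) :
    t * ⟪v, νy⟫_ℝ ≤ 2 * ε + dist x y := by
  set z := x + t • v - ε • νx
  have hzx : z - x = t • v - ε • νx := by
    show x + t • v - ε • νx - x = _
    abel
  have hzx_norm : ‖z - x‖ ≤ t + ε := by
    rw [hzx]
    refine (norm_sub_le _ _).trans_eq ?_
    rw [norm_smul, norm_smul, hv, hνx, norm_of_nonneg ht.le, norm_of_nonneg hε, mul_one, mul_one]
  have hz_ball_x : z ∈ ball x h := by
    rw [mem_ball, dist_eq_norm]; linarith [dist_nonneg (x := x) (y := y)]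
  have hz_ball_y : z ∈ ball y h := by
    rw [mem_ball]
    linarith [dist_triangle z x y, dist_eq_norm z x]
  have hz_A : z ∈ A := hint z hz_ball_x <| by
    rw [hzx, inner_sub_left, real_inner_smul_left, real_inner_smul_left,
      real_inner_self_eq_norm_sq, hνx]
    nlinarith
  have hz_y : ⟪z - y, νy⟫_ℝ < ε :=
    not_le.1 fun hle => hext z hz_ball_y hle (subset_closure (hAB hz_A))
  have hνxy : ⟪νx, νy⟫_ℝ ≤ 1 := by
    simpa [hνx, hνy] using real_inner_le_norm νx νy
  have hxy : -dist x y ≤ ⟪x - y, νy⟫_ℝ := by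
    have := abs_real_inner_le_norm (x - y) νy
    rw [hνy, mul_one, ← dist_eq_norm] at this
    linarith [neg_abs_le ⟪x - y, νy⟫_ℝ]
  have hz_y_eq : ⟪z - y, νy⟫_ℝ = t * ⟪v, νy⟫_ℝ - ε * ⟪νx, νy⟫_ℝ + ⟪x - y, νy⟫_ℝ := by
    rw [show z - y = (z - x) + (x - y) by abel, inner_add_left, hzx, inner_sub_left,
      real_inner_smul_left, real_inner_smul_left]
  nlinarith

theorem norm_sub_le_of_nested_halfspaces (hAB : A ⊆ B) (hνx : ‖νx‖ = 1) (hνy : ‖νy‖ = 1)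
    {h ε t : ℝ} (hε : 0 ≤ ε) (ht : 0 < t) (hth : t + ε + dist x y < h)
    (hint : ∀ z ∈ ball x h, ⟪z - x, νx⟫_ℝ ≤ -ε → z ∈ A)
    (hext : ∀ z ∈ ball y h, ε ≤ ⟪z - y, νy⟫_ℝ → z ∉ closure B) :
    ‖νx - νy‖ ≤ 3 * ((2 * ε + dist x y) / t) :=
  norm_sub_le_of_forall_inner_le hνx hνy (by positivity) fun _ hv hvx =>
    (le_div_iff₀' ht).2 (inner_le_of_nested_halfspaces hAB hνx hνy hε ht hth hint hext hv hvx)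

theorem norm_sub_le_rpow_of_nested (hAB : A ⊆ B) (hνx : ‖νx‖ = 1) (hνy : ‖νy‖ = 1)
    {C α h₀ : ℝ} (hC : 0 ≤ C) (hα : 0 < α) (hh₀ : 0 ≤ h₀)
    (hint : ∀ h : ℝ, 0 < h → h < h₀ → ∀ z ∈ ball x h,
      ⟪z - x, νx⟫_ℝ ≤ -(C * h ^ (1 + α)) → z ∈ A)
    (hext : ∀ h : ℝ, 0 < h → h < h₀ → ∀ z ∈ ball y h,
      C * h ^ (1 + α) ≤ ⟪z - y, νy⟫_ℝ → z ∉ closure B)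
    (hr : 0 < dist x y) (hrh₀ : dist x y < h₀ ^ (1 + α))
    (hsmall : dist x y ^ (α / (1 + α)) < (2 * C + 2)⁻¹) :
    ‖νx - νy‖ ≤ (12 * C + 6) * dist x y ^ (α / (1 + α)) := by
  set r := dist x y
  set s := r ^ (α / (1 + α))
  have h1α : 0 < 1 + α := by linarith
  set h := r ^ (1 + α)⁻¹
  have hh : 0 < h := by positivity
  have hhr : h ^ (1 + α) = r := rpow_inv_rpow hr.le h1α.ne'
  have hhh₀ : h < h₀ := (rpow_inv_lt_iff_of_pos hr.le hh₀ h1α).2 hrh₀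
  have hrs : r = s * h := by
    show r = r ^ (α / (1 + α)) * r ^ (1 + α)⁻¹
    rw [← rpow_add hr, show α / (1 + α) + (1 + α)⁻¹ = 1 by field_simp; ring, rpow_one]
  have hs : (2 * C + 2) * s < 1 := by
    have := mul_lt_mul_of_pos_left hsmall (by positivity : 0 < 2 * C + 2)
    rwa [mul_inv_cancel₀ (by positivity)] at this
  have hth : h / 2 + C * r + r < h := by nlinarith
  have key : ‖νx - νy‖ ≤ 3 * ((2 * (C * r) + r) / (h / 2)) :=
    norm_sub_le_of_nested_halfspaces hAB hνx hνy (by positivity) (by positivity) hth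
    (by simpa only [hhr] using hint h hh hhh₀) (by simpa only [hhr] using hext h hh hhh₀)
  refine key.trans_eq ?_
  rw [hrs]
  field_simp
  ring

end InnerProductSpace

/-- Hölder continuity, with exponent `α/(1+α)`, of the outward
unit normal `ν(x)` to the monotone family of domains `Ω_{T(x)}` whose
boundaries are uniformly `C^{1,α}` (in the sense of uniform halfspace
approximation at scale `h` with error `C h^{1+α}`). -/
theorem unit_normal_holder {d : ℕ} (C α : ℝ) (hC : 0 < C) (hα : α ∈ Set.Ioo (0:ℝ) 1) :
    ∃ C' > (0:ℝ),
      ∀ (U : Set (EuclideanSpace ℝ (Fin d)))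
        (Ω : ℝ → Set (EuclideanSpace ℝ (Fin d)))
        (T : EuclideanSpace ℝ (Fin d) → ℝ)
        (ν : EuclideanSpace ℝ (Fin d) → EuclideanSpace ℝ (Fin d)) (h₀ : ℝ),
        0 < h₀ →
        Monotone Ω →
        (∀ x ∈ U, x ∈ frontier (Ω (T x))) →
        (∀ x ∈ U, ‖ν x‖ = 1) →
        (∀ x ∈ U, ∀ h : ℝ, 0 < h → h < h₀ → ∀ z ∈ Metric.ball x h,
          (inner ℝ (z - x) (ν x) : ℝ) ≤ -(C * h ^ (1 + α)) → z ∈ Ω (T x)) →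
        (∀ x ∈ U, ∀ h : ℝ, 0 < h → h < h₀ → ∀ z ∈ Metric.ball x h,
          C * h ^ (1 + α) ≤ (inner ℝ (z - x) (ν x) : ℝ) → z ∉ closure (Ω (T x))) →
        ∃ δ > (0:ℝ), ∀ x ∈ U, ∀ y ∈ U, dist x y < δ →
          ‖ν x - ν y‖ ≤ C' * dist x y ^ (α / (1 + α)) := by
  obtain ⟨hα0, -⟩ := hα
  have hβ : 0 < α / (1 + α) := by positivity
  refine ⟨12 * C + 6, by positivity, fun U Ω T ν h₀ hh₀ hΩ _ hν hint hext => ?_⟩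
  refine ⟨min (h₀ ^ (1 + α)) ((2 * C + 2)⁻¹ ^ (α / (1 + α))⁻¹), by positivity, ?_⟩
  intro x hx y hy hxy
  rcases eq_or_ne x y with rfl | hne
  · simp [zero_rpow hβ.ne']
  have hr : 0 < dist x y := dist_pos.2 hne
  have hrh₀ : dist x y < h₀ ^ (1 + α) := hxy.trans_le (min_le_left _ _)
  have hsmall : dist x y ^ (α / (1 + α)) < (2 * C + 2)⁻¹ :=
    (lt_rpow_inv_iff_of_pos hr.le (by positivity) hβ).1 (hxy.trans_le (min_le_right _ _))
  rcases le_total (T x) (T y) with hT | hT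
  · exact norm_sub_le_rpow_of_nested (hΩ hT) (hν x hx) (hν y hy) hC.le hα0 hh₀.le
      (hint x hx) (hext y hy) hr hrh₀ hsmall
  · rw [norm_sub_rev, dist_comm]
    rw [dist_comm] at hr hrh₀ hsmall
    exact norm_sub_le_rpow_of_nested (hΩ hT) (hν y hy) (hν x hx) hC.le hα0 hh₀.le
      (hint y hy) (hext x hx) hr hrh₀ hsmall
end
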